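/- arXiv:2411.06943 — 17 statements merged into one kernel-verified Lean document; each statement's English description precedes it below -/
import Mathlib

section
/- For every time step h > 0 and every ε ∈ (0,1), there exists an initial value u0 > 0 such that the explicit Euler sequence defined by u_n = u_{n-1} - (h/ε²)(u_{n-1}³ - u_{n-1}) for all n ≥ 1 satisfies u_n = -1 for every n ≥ 1; in particular the numerical solution converges to -1, which differs from sign(u0) = 1. -/
/-- For every time step `h > 0` and every `ε ∈ (0,1)`, there exists an initial value
`u0 > 0` such that the explicit Euler sequence
`u (n+1) = u n - (h/ε²) * ((u n)³ - u n)` satisfies `u n = -1` for every `n ≥ 1`;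
in particular it converges to `-1 ≠ sign u0 = 1`. -/
theorem explicit_euler_wrong_steady_state
    (h ε : ℝ) (hh : 0 < h) (hε0 : 0 < ε) (hε1 : ε < 1) :
    ∃ u0 : ℝ, 0 < u0 ∧
      ∀ u : ℕ → ℝ, u 0 = u0 →
        (∀ n : ℕ, u (n + 1) = u n - (h / ε ^ 2) * ((u n) ^ 3 - u n)) →
        (∀ n : ℕ, 1 ≤ n → u n = -1) ∧
        Filter.Tendsto u Filter.atTop (nhds (-1)) ∧
        (-1 : ℝ) ≠ (if 0 < u0 then (1 : ℝ) else -1) := by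
  set c : ℝ := h / ε ^ 2 with hc
  have hcpos : 0 < c := div_pos hh (pow_pos hε0 2)
  set M : ℝ := max 2 (1 + 1 / c) with hM
  have hM2 : (2 : ℝ) ≤ M := le_max_left _ _
  have hM1 : (1 : ℝ) ≤ M := by linarith
  have hMc : 1 + 1 / c ≤ M := le_max_right _ _
  set g : ℝ → ℝ := fun x => x - c * (x ^ 3 - x) + 1 with hg
  have hgc : Continuous g := by continuity
  have hgM : g M ≤ 0 := by
    have key : c * (M - 1) ≥ 1 := by
      have h1 : 1 / c ≤ M - 1 := by linarith
      have := (div_le_iff₀ hcpos).mp h1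
      linarith [this]
    have hfac : g M = (M + 1) * (1 - c * M * (M - 1)) := by ring
    have : c * M * (M - 1) ≥ 2 * 1 := by
      have h0 : 0 ≤ c * (M - 1) := by linarith
      calc c * M * (M - 1) = M * (c * (M - 1)) := by ring
        _ ≥ 2 * 1 := by
            apply mul_le_mul hM2 key (by norm_num) (by linarith)
    rw [hfac]
    have hMp : 0 ≤ M + 1 := by linarith
    nlinarith
  have hg1 : (0 : ℝ) ≤ g 1 := by simp [hg]
  have := intermediate_value_Icc' hM1 hgc.continuousOn
  have h0mem : (0 : ℝ) ∈ Set.Icc (g M) (g 1) := ⟨hgM, hg1⟩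
  obtain ⟨u0, hu0mem, hu0⟩ := this h0mem
  refine ⟨u0, by linarith [hu0mem.1], ?_⟩
  intro u hu0eq hrec
  have hu1 : u 1 = -1 := by
    have := hrec 0
    rw [hu0eq] at this
    have : u 1 = g u0 - 1 := by rw [this]; simp only [hg]; ring
    rw [this, hu0]; ring
  have hstay : ∀ n : ℕ, 1 ≤ n → u n = -1 := by
    intro n hn
    induction n with
    | zero => omega
    | succ k ih =>
      rcases Nat.eq_zero_or_pos k with hk | hk
      · subst hk; exact hu1
      · have hk1 : u k = -1 := ih hk
        have := hrec k
        rw [hk1] at this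
        rw [this]; ring
  refine ⟨hstay, ?_, by norm_num [show 0 < u0 by linarith [hu0mem.1]]⟩
  have hev : ∀ᶠ n in Filter.atTop, u n = -1 :=
    Filter.eventually_atTop.2 ⟨1, hstay⟩
  exact tendsto_const_nhds.congr' (Filter.EventuallyEq.symm hev)
end

section
/- Let ε ∈ (0,1), let u0 ∈ ℝ with |u0| > 1, and let 0 < h ≤ ε²/(u0² + |u0|). Then the explicit Euler sequence (u_n) with initial value u_0 = u0 satisfies: if u0 > 1 then u_n ≥ 1 for all n and (u_n) is nonincreasing, while if u0 < -1 then u_n ≤ -1 for all n and (u_n) is nondecreasing; in both cases u_n converges to sign(u0) as n → ∞. -/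
/-!
Write the scheme as `u (n + 1) = eulerStep c (u n)` with `c = h / ε²`. The step map is odd, so
it suffices to treat `u0 > 1`. From the factorisation
`eulerStep c x - 1 = (x - 1) * (1 - c * (x² + x))`, the step maps each `x ∈ [1, u0]` into
`[1, x]` as long as `c * (u0² + u0) ≤ 1`, which is the step-size condition. Hence the sequence is
antitone and bounded below by `1`; its limit is a fixed point of the step, i.e. a root of
`x³ - x` that is at least `1`, so it equals `1`.
-/

open Filter Topology

lemma eq_of_tendsto_of_recurrence {X : Type*} [TopologicalSpace X] [T2Space X] {f : X → X}
    {u : ℕ → X} {L : X} (hf : ContinuousAt f L) (hrec : ∀ n, u (n + 1) = f (u n))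
    (hu : Tendsto u atTop (𝓝 L)) : f L = L := by
  have hshift : Tendsto (fun n => u (n + 1)) atTop (𝓝 (f L)) := by
    simp only [hrec]; exact hf.tendsto.comp hu
  exact tendsto_nhds_unique hshift (hu.comp (tendsto_add_atTop_nat 1))

def eulerStep (c x : ℝ) : ℝ := x - c * (x ^ 3 - x)

namespace eulerStep

variable {c x : ℝ}

lemma neg_right : eulerStep c (-x) = -eulerStep c x := by
  unfold eulerStep; ring

lemma continuous (c : ℝ) : Continuous (eulerStep c) := by
  unfold eulerStep; fun_prop

lemma le_self (hc : 0 ≤ c) (hx : 1 ≤ x) : eulerStep c x ≤ x := by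
  have : 0 ≤ x ^ 3 - x := by
    nlinarith [mul_nonneg (sub_nonneg.2 hx) (by positivity : 0 ≤ x * (x + 1))]
  unfold eulerStep; nlinarith

lemma one_le {M : ℝ} (hc : 0 ≤ c) (hx : 1 ≤ x) (hxM : x ≤ M) (hcM : c * (M ^ 2 + M) ≤ 1) :
    1 ≤ eulerStep c x := by
  have hfactor : eulerStep c x - 1 = (x - 1) * (1 - c * (x ^ 2 + x)) := by
    unfold eulerStep; ring
  have hcx : c * (x ^ 2 + x) ≤ c * (M ^ 2 + M) := by gcongr
  nlinarith

lemma eq_one_of_eq_self (hc : 0 < c) (hx : 1 ≤ x) (hfix : eulerStep c x = x) : x = 1 := by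
  have hroot : (x - 1) * (x * (x + 1)) = 0 := by
    have : c * (x ^ 3 - x) = 0 := by unfold eulerStep at hfix; linarith
    linear_combination (mul_eq_zero.1 this).resolve_left hc.ne'
  have hpos : x * (x + 1) ≠ 0 := by positivity
  linarith [(mul_eq_zero.1 hroot).resolve_right hpos]

end eulerStep

section EulerSequence

variable {c : ℝ} {u : ℕ → ℝ} (hrec : ∀ n, u (n + 1) = eulerStep c (u n))
include hrec

lemma euler_mem_Icc (hc : 0 ≤ c) (hu0 : 1 ≤ u 0) (hcu0 : c * (u 0 ^ 2 + u 0) ≤ 1) (n : ℕ) :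
    u n ∈ Set.Icc 1 (u 0) := by
  induction n with
  | zero => exact ⟨hu0, le_rfl⟩
  | succ n ih =>
    rw [hrec]
    exact ⟨eulerStep.one_le hc ih.1 ih.2 hcu0, (eulerStep.le_self hc ih.1).trans ih.2⟩

lemma euler_antitone (hc : 0 ≤ c) (hge : ∀ n, 1 ≤ u n) : Antitone u :=
  antitone_nat_of_succ_le fun n => (hrec n).symm ▸ eulerStep.le_self hc (hge n)

lemma euler_tendsto_one (hc : 0 < c) (hge : ∀ n, 1 ≤ u n) : Tendsto u atTop (𝓝 1) := by
  have hlim := tendsto_atTop_ciInf (euler_antitone hrec hc.le hge) ⟨1, by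
    rintro _ ⟨n, rfl⟩; exact hge n⟩
  have hfix := eq_of_tendsto_of_recurrence (eulerStep.continuous c).continuousAt hrec hlim
  rwa [eulerStep.eq_one_of_eq_self hc (le_ciInf hge) hfix] at hlim

lemma euler_of_one_le (hc : 0 < c) (hu0 : 1 ≤ u 0) (hcu0 : c * (u 0 ^ 2 + u 0) ≤ 1) :
    (∀ n, 1 ≤ u n) ∧ Antitone u ∧ Tendsto u atTop (𝓝 1) := by
  have hge n : 1 ≤ u n := (euler_mem_Icc hrec hc.le hu0 hcu0 n).1
  exact ⟨hge, euler_antitone hrec hc.le hge, euler_tendsto_one hrec hc hge⟩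

end EulerSequence

theorem explicit_euler_monotone_big_initial_general
    (ε : ℝ) (hε0 : 0 < ε)
    (u0 : ℝ) (hu0 : 1 < |u0|)
    (h : ℝ) (hh0 : 0 < h) (hh1 : h ≤ ε ^ 2 / (u0 ^ 2 + |u0|))
    (u : ℕ → ℝ) (hinit : u 0 = u0)
    (hrec : ∀ n : ℕ, u (n + 1) = u n - (h / ε ^ 2) * ((u n) ^ 3 - u n)) :
    (1 < u0 → (∀ n : ℕ, 1 ≤ u n) ∧ Antitone u) ∧
    (u0 < -1 → (∀ n : ℕ, u n ≤ -1) ∧ Monotone u) ∧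
    Filter.Tendsto u Filter.atTop (nhds (if 0 < u0 then (1 : ℝ) else -1)) := by
  have hc : 0 < h / ε ^ 2 := by positivity
  have hcu0 : h / ε ^ 2 * (u0 ^ 2 + |u0|) ≤ 1 := by
    rw [div_mul_eq_mul_div]
    exact div_le_one_of_le₀ ((le_div_iff₀ (by positivity)).1 hh1) (by positivity)
  rcases lt_abs.1 hu0 with hpos | hneg
  · rw [abs_of_pos (by linarith), ← hinit] at hcu0
    obtain ⟨hge, hanti, hlim⟩ := euler_of_one_le hrec hc (hinit ▸ hpos.le) hcu0
    refine ⟨fun _ => ⟨hge, hanti⟩, fun hneg => absurd hneg (by linarith), ?_⟩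
    rwa [if_pos (by linarith)]
  · rw [abs_of_neg (by linarith), ← neg_sq u0, ← hinit] at hcu0
    have hrec' n : -u (n + 1) = eulerStep (h / ε ^ 2) (-u n) := by
      rw [eulerStep.neg_right, hrec]; rfl
    obtain ⟨hge, hanti, hlim⟩ := euler_of_one_le (u := (-u ·)) hrec' hc (by linarith) hcu0
    refine ⟨fun hpos => absurd hpos (by linarith), fun _ => ⟨fun n => by linarith [hge n], ?_⟩, ?_⟩
    · simpa only [neg_neg] using hanti.neg
    · rw [if_neg (by linarith)]
      simpa only [neg_neg] using hlim.neg

/-- Explicit Euler with `|u0| > 1` and `0 < h ≤ ε²/(u0² + |u0|)`: the numerical solution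
stays beyond the equilibrium `±1`, is monotone, and converges to `sign u0`. -/
theorem explicit_euler_monotone_big_initial
    (ε : ℝ) (hε0 : 0 < ε) (hε1 : ε < 1)
    (u0 : ℝ) (hu0 : 1 < |u0|)
    (h : ℝ) (hh0 : 0 < h) (hh1 : h ≤ ε ^ 2 / (u0 ^ 2 + |u0|))
    (u : ℕ → ℝ) (hinit : u 0 = u0)
    (hrec : ∀ n : ℕ, u (n + 1) = u n - (h / ε ^ 2) * ((u n) ^ 3 - u n)) :
    (1 < u0 → (∀ n : ℕ, 1 ≤ u n) ∧ Antitone u) ∧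
    (u0 < -1 → (∀ n : ℕ, u n ≤ -1) ∧ Monotone u) ∧
    Filter.Tendsto u Filter.atTop (nhds (if 0 < u0 then (1 : ℝ) else -1)) :=
  explicit_euler_monotone_big_initial_general ε hε0 u0 hu0 h hh0 hh1 u hinit hrec
end

section
/- Let ε ∈ (0,1), let u0 ∈ ℝ with 0 < |u0| < 1, and let 0 < h ≤ ε²/2. Then the explicit Euler sequence (u_n) with initial value u_0 = u0 satisfies: if 0 < u0 < 1 then 0 < u_n ≤ 1 for all n and (u_n) is nondecreasing, while if -1 < u0 < 0 then -1 ≤ u_n < 0 for all n and (u_n) is nonincreasing; in both cases u_n converges to sign(u0) as n → ∞. -/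
/-!
Write the scheme as iteration of `x ↦ x - c (x³ - x)` with `c = h / ε² ∈ (0, 1/2]`. This map is
odd, and on `[0, 1]` it satisfies `x ≤ f x ≤ 1`, because `f x - x = c x (1 - x)(1 + x)` and
`1 - f x = (1 - x)(1 - c x (1 + x))` with `c x (1 + x) ≤ 1`. So from `u0 ∈ (0, 1)` the iterates
increase inside `(0, 1]`; their limit is a fixed point in `(0, 1]`, i.e. a root of `x³ - x`,
hence `1`. The case `u0 < 0` follows by oddness.
-/

open Filter Set Topology

namespace ExplicitEuler

/-- One explicit Euler step of size `c = h / ε²` for `u' = -(u³ - u) / ε²`. -/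
def step (c x : ℝ) : ℝ := x - c * (x ^ 3 - x)

variable {c : ℝ}

lemma commute_neg_step : Function.Commute Neg.neg (step c) := fun x => by
  simp only [step]; ring

lemma le_step (hc : 0 ≤ c) {x : ℝ} (hx0 : 0 ≤ x) (hx1 : x ≤ 1) : x ≤ step c x := by
  have : 0 ≤ c * x * (1 - x) * (1 + x) := by
    have := sub_nonneg.2 hx1
    positivity
  unfold step
  linarith

lemma step_le_one (hc : c ≤ 1 / 2) {x : ℝ} (hx0 : 0 ≤ x) (hx1 : x ≤ 1) : step c x ≤ 1 := by
  have hcx : c * (x * (1 + x)) ≤ 1 := by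
    rcases le_or_gt c 0 with hc0 | hc0
    · nlinarith [mul_nonneg hx0 (by linarith : 0 ≤ 1 + x)]
    · nlinarith [mul_le_mul hx1 (by linarith : 1 + x ≤ 2) (by linarith) zero_le_one]
  have : 1 - step c x = (1 - x) * (1 - c * (x * (1 + x))) := by unfold step; ring
  nlinarith [mul_nonneg (sub_nonneg.2 hx1) (sub_nonneg.2 hcx)]

lemma mapsTo_step_Ioc (hc0 : 0 ≤ c) (hc1 : c ≤ 1 / 2) : MapsTo (step c) (Ioc 0 1) (Ioc 0 1) :=
  fun _ ⟨hx0, hx1⟩ => ⟨hx0.trans_le (le_step hc0 hx0.le hx1), step_le_one hc1 hx0.le hx1⟩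

lemma monotone_step_iterate (hc0 : 0 ≤ c) (hc1 : c ≤ 1 / 2) {x : ℝ} (hx : x ∈ Ioc 0 1) :
    Monotone fun n => (step c)^[n] x :=
  monotone_nat_of_le_succ fun n => by
    obtain ⟨hn0, hn1⟩ := (mapsTo_step_Ioc hc0 hc1).iterate n hx
    rw [Function.iterate_succ_apply']
    exact le_step hc0 hn0.le hn1

lemma eq_one_of_step_eq (hc : c ≠ 0) {x : ℝ} (hx : x ∈ Ioc 0 1) (hfix : step c x = x) : x = 1 := by
  have hroot : x * (x - 1) * (x + 1) = 0 := by
    have : c * (x * (x - 1) * (x + 1)) = 0 := by unfold step at hfix; linear_combination -hfix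
    exact (mul_eq_zero.1 this).resolve_left hc
  rcases mul_eq_zero.1 hroot with h | h
  · rcases mul_eq_zero.1 h with h | h
    · exact absurd h hx.1.ne'
    · linarith
  · linarith [hx.1]

lemma tendsto_step_iterate_one (hc0 : 0 < c) (hc1 : c ≤ 1 / 2) {x : ℝ} (hx : x ∈ Ioc 0 1) :
    Tendsto (fun n => (step c)^[n] x) atTop (𝓝 1) := by
  have hmem := fun n => (mapsTo_step_Ioc hc0.le hc1).iterate n hx
  have hbdd : BddAbove (range fun n => (step c)^[n] x) :=
    ⟨1, by rintro _ ⟨n, rfl⟩; exact (hmem n).2⟩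
  have hlim := tendsto_atTop_ciSup (monotone_step_iterate hc0.le hc1 hx) hbdd
  have hsup : (⨆ n, (step c)^[n] x) ∈ Ioc 0 1 :=
    ⟨hx.1.trans_le (le_ciSup hbdd 0), ciSup_le fun n => (hmem n).2⟩
  have hcont : Continuous (step c) := by unfold step; fun_prop
  rwa [eq_one_of_step_eq hc0.ne' hsup (isFixedPt_of_tendsto_iterate hlim hcont.continuousAt)]
    at hlim

lemma eq_step_iterate {u : ℕ → ℝ} (hrec : ∀ n, u (n + 1) = step c (u n)) (n : ℕ) :
    u n = (step c)^[n] (u 0) := by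
  induction n with
  | zero => rfl
  | succ n ih => rw [hrec, ih, Function.iterate_succ_apply']

end ExplicitEuler

open ExplicitEuler

theorem explicit_euler_monotone_small_initial_general
    (ε : ℝ)
    (u0 : ℝ) (hu0 : 0 < |u0|) (hu0' : |u0| < 1)
    (h : ℝ) (hh0 : 0 < h) (hh1 : h ≤ ε ^ 2 / 2)
    (u : ℕ → ℝ) (hinit : u 0 = u0)
    (hrec : ∀ n : ℕ, u (n + 1) = u n - (h / ε ^ 2) * ((u n) ^ 3 - u n)) :
    (0 < u0 ∧ u0 < 1 → (∀ n : ℕ, 0 < u n ∧ u n ≤ 1) ∧ Monotone u) ∧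
    (-1 < u0 ∧ u0 < 0 → (∀ n : ℕ, -1 ≤ u n ∧ u n < 0) ∧ Antitone u) ∧
    Filter.Tendsto u Filter.atTop (nhds (if 0 < u0 then (1 : ℝ) else -1)) := by
  have hc0 : 0 < h / ε ^ 2 := div_pos hh0 (by linarith)
  have hc1 : h / ε ^ 2 ≤ 1 / 2 := by rw [div_le_iff₀ (by linarith)]; linarith
  have hu : u = fun n => (step (h / ε ^ 2))^[n] u0 :=
    funext (hinit ▸ eq_step_iterate hrec)
  obtain ⟨hneg1, hlt1⟩ := abs_lt.1 hu0'
  rcases (abs_pos.1 hu0).lt_or_gt with hneg | hpos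
  · have hmem : -u0 ∈ Ioc 0 1 := ⟨neg_pos.2 hneg, by linarith⟩
    have hu' : u = fun n => -(step (h / ε ^ 2))^[n] (-u0) := by
      rw [hu]; funext n; rw [(commute_neg_step.iterate_right n).eq, neg_neg]
    refine ⟨fun hpos => absurd hpos.1 hneg.not_gt, fun _ => ⟨fun n => ?_, ?_⟩, ?_⟩
    · have := (mapsTo_step_Ioc hc0.le hc1).iterate n hmem
      rw [hu']; exact ⟨by linarith [this.2], by linarith [this.1]⟩
    · rw [hu']; exact (monotone_step_iterate hc0.le hc1 hmem).neg
    · rw [if_neg hneg.not_gt, hu']; exact (tendsto_step_iterate_one hc0 hc1 hmem).neg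
  · have hmem : u0 ∈ Ioc 0 1 := ⟨hpos, hlt1.le⟩
    refine ⟨fun _ => ⟨fun n => ?_, hu ▸ monotone_step_iterate hc0.le hc1 hmem⟩,
      fun hneg => absurd hneg.2 hpos.not_gt, ?_⟩
    · rw [hu]; exact (mapsTo_step_Ioc hc0.le hc1).iterate n hmem
    · rw [if_pos hpos, hu]; exact tendsto_step_iterate_one hc0 hc1 hmem

/-- Explicit Euler with `0 < |u0| < 1` and `0 < h ≤ ε²/2`: the numerical solution stays
between `0` and `sign u0`, is monotone, and converges to `sign u0`. -/
theorem explicit_euler_monotone_small_initial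
    (ε : ℝ) (hε0 : 0 < ε) (hε1 : ε < 1)
    (u0 : ℝ) (hu0 : 0 < |u0|) (hu0' : |u0| < 1)
    (h : ℝ) (hh0 : 0 < h) (hh1 : h ≤ ε ^ 2 / 2)
    (u : ℕ → ℝ) (hinit : u 0 = u0)
    (hrec : ∀ n : ℕ, u (n + 1) = u n - (h / ε ^ 2) * ((u n) ^ 3 - u n)) :
    (0 < u0 ∧ u0 < 1 → (∀ n : ℕ, 0 < u n ∧ u n ≤ 1) ∧ Monotone u) ∧
    (-1 < u0 ∧ u0 < 0 → (∀ n : ℕ, -1 ≤ u n ∧ u n < 0) ∧ Antitone u) ∧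
    Filter.Tendsto u Filter.atTop (nhds (if 0 < u0 then (1 : ℝ) else -1)) :=
  explicit_euler_monotone_small_initial_general ε u0 hu0 hu0' h hh0 hh1 u hinit hrec
end

section
/- Let ε ∈ (0,1), let u0 ∈ ℝ with u0 ∉ {0, 1, -1}, and suppose 0 < h ≤ h*, where h* = ε²/(u0² + |u0|) if |u0| > 1 and h* = ε²/2 if 0 < |u0| < 1. Then the explicit Euler sequence (u_n) with initial value u_0 = u0 satisfies the discrete energy stability E(u_n) ≤ E(u_{n-1}) for all n ≥ 1, where E(v) = (v² - 1)²/(4ε²). -/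
lemma euler_helper (lam : ℝ) (hlam : 0 < lam) (u0 : ℝ) (hu0 : 0 < u0) (hu0' : u0 ≠ 1)
    (hl : if 1 < u0 then lam * (u0 ^ 2 + u0) ≤ 1 else lam ≤ 1 / 2)
    (u : ℕ → ℝ) (hinit : u 0 = u0)
    (hrec : ∀ n : ℕ, u (n + 1) = u n - lam * ((u n) ^ 3 - u n)) :
    ∀ n : ℕ, ((u (n + 1)) ^ 2 - 1) ^ 2 ≤ ((u n) ^ 2 - 1) ^ 2 := by
  rcases lt_or_gt_of_ne hu0' with hlt | hgt
  · -- 0 < u0 < 1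
    rw [if_neg (by linarith)] at hl
    have inv : ∀ n : ℕ, 0 < u n ∧ u n ≤ 1 := by
      intro n
      induction n with
      | zero => rw [hinit]; exact ⟨hu0, le_of_lt hlt⟩
      | succ k ih =>
        obtain ⟨h1, h2⟩ := ih
        have hx2 : u k ^ 2 ≤ 1 := by nlinarith
        have hprod : 0 ≤ lam * (u k * (1 - u k ^ 2)) :=
          mul_nonneg hlam.le (mul_nonneg h1.le (by linarith))
        have h5 : lam * (u k * (1 + u k)) ≤ 1 := by nlinarith
        rw [hrec k]
        constructor
        · nlinarith
        · nlinarith [mul_nonneg (sub_nonneg.2 h2) (sub_nonneg.2 h5)]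
    intro n
    obtain ⟨h1, h2⟩ := inv n
    obtain ⟨h3, h4⟩ := inv (n + 1)
    have hx2 : u n ^ 2 ≤ 1 := by nlinarith
    have hprod : 0 ≤ lam * (u n * (1 - u n ^ 2)) :=
      mul_nonneg hlam.le (mul_nonneg h1.le (by linarith))
    have hy : u n ≤ u (n + 1) := by rw [hrec n]; nlinarith
    have hxy : u n ^ 2 ≤ u (n + 1) ^ 2 := by nlinarith
    have hy1 : u (n + 1) ^ 2 ≤ 1 := by nlinarith
    nlinarith [mul_nonneg (sub_nonneg.2 hxy)
      (by nlinarith : (0:ℝ) ≤ 2 - u n ^ 2 - u (n + 1) ^ 2)]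
  · -- 1 < u0
    rw [if_pos hgt] at hl
    have inv : ∀ n : ℕ, 1 ≤ u n ∧ u n ≤ u0 := by
      intro n
      induction n with
      | zero => rw [hinit]; exact ⟨le_of_lt hgt, le_refl _⟩
      | succ k ih =>
        obtain ⟨h1, h2⟩ := ih
        have h5 : lam * (u k ^ 2 + u k) ≤ 1 := by nlinarith
        have hprod : 0 ≤ lam * (u k * (u k ^ 2 - 1)) :=
          mul_nonneg hlam.le (mul_nonneg (by linarith) (by nlinarith))
        rw [hrec k]
        constructor
        · nlinarith [mul_nonneg (sub_nonneg.2 h1) (sub_nonneg.2 h5)]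
        · nlinarith
    intro n
    obtain ⟨h1, h2⟩ := inv n
    obtain ⟨h3, h4⟩ := inv (n + 1)
    have hprod : 0 ≤ lam * (u n * (u n ^ 2 - 1)) :=
      mul_nonneg hlam.le (mul_nonneg (by linarith) (by nlinarith))
    have hy : u (n + 1) ≤ u n := by rw [hrec n]; nlinarith
    have hxy : u (n + 1) ^ 2 ≤ u n ^ 2 := by nlinarith
    have hy1 : 1 ≤ u (n + 1) ^ 2 := by nlinarith
    nlinarith [mul_nonneg (sub_nonneg.2 hxy)
      (by nlinarith : (0:ℝ) ≤ u n ^ 2 + u (n + 1) ^ 2 - 2)]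

/-- Energy stability of the explicit Euler scheme for `0 < h ≤ h*`, where
`h* = ε²/(u0² + |u0|)` if `|u0| > 1` and `h* = ε²/2` if `0 < |u0| < 1`. -/
theorem explicit_euler_energy_stability
    (ε : ℝ) (hε0 : 0 < ε) (hε1 : ε < 1)
    (u0 : ℝ) (hu0 : u0 ∉ ({0, 1, -1} : Set ℝ))
    (h : ℝ) (hh0 : 0 < h)
    (hh1 : h ≤ if 1 < |u0| then ε ^ 2 / (u0 ^ 2 + |u0|) else ε ^ 2 / 2)
    (u : ℕ → ℝ) (hinit : u 0 = u0)
    (hrec : ∀ n : ℕ, u (n + 1) = u n - (h / ε ^ 2) * ((u n) ^ 3 - u n)) :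
    ∀ n : ℕ, ((u (n + 1)) ^ 2 - 1) ^ 2 / (4 * ε ^ 2) ≤ ((u n) ^ 2 - 1) ^ 2 / (4 * ε ^ 2) := by
  simp only [Set.mem_insert_iff, Set.mem_singleton_iff, not_or] at hu0
  obtain ⟨h0, hp1, hm1⟩ := hu0
  have hε2 : (0:ℝ) < ε ^ 2 := by positivity
  have hlam : 0 < h / ε ^ 2 := div_pos hh0 hε2
  have habs0 : 0 < |u0| := abs_pos.mpr h0
  have habs1 : |u0| ≠ 1 := by
    intro hc
    rcases (abs_eq (by norm_num : (0:ℝ) ≤ 1)).mp hc with h' | h' <;> simp_all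
  have hsq : |u0| ^ 2 = u0 ^ 2 := sq_abs u0
  have hl : if 1 < |u0| then (h / ε ^ 2) * (|u0| ^ 2 + |u0|) ≤ 1 else h / ε ^ 2 ≤ 1 / 2 := by
    split_ifs with hc
    · rw [if_pos hc] at hh1
      have hD : (0:ℝ) < u0 ^ 2 + |u0| := by positivity
      have hh1' : h * (u0 ^ 2 + |u0|) ≤ ε ^ 2 := by
        rw [le_div_iff₀ hD] at hh1; linarith
      rw [hsq, div_mul_eq_mul_div, div_le_one hε2]
      linarith
    · rw [if_neg hc] at hh1
      have h2' : h * 2 ≤ ε ^ 2 := by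
        rw [le_div_iff₀ (by norm_num : (0:ℝ) < 2)] at hh1; linarith
      rw [div_le_div_iff₀ hε2 (by norm_num : (0:ℝ) < 2)]
      linarith
  have key : ∀ n : ℕ, ((u (n + 1)) ^ 2 - 1) ^ 2 ≤ ((u n) ^ 2 - 1) ^ 2 := by
    rcases lt_or_gt_of_ne h0 with hneg | hpos
    · -- u0 < 0 : use w = -u
      have habs : |u0| = -u0 := abs_of_neg hneg
      rw [habs] at hl
      have := euler_helper (h / ε ^ 2) hlam (-u0) (by linarith)
        (by intro hc; apply hm1; linarith) hl
        (fun n => -u n) (by simp [hinit])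
        (by intro n; show -u (n + 1) = -u n - _; rw [hrec n]; ring)
      intro n
      have hn := this n
      simpa using hn
    · have habs : |u0| = u0 := abs_of_pos hpos
      rw [habs] at hl
      exact euler_helper (h / ε ^ 2) hlam u0 hpos hp1 hl u hinit hrec
  intro n
  have h4 : (0:ℝ) < 4 * ε ^ 2 := by positivity
  gcongr ?_ / _
  exact key n
end

section
/- Let ε ∈ (0,1), 0 < h ≤ ε², u0 ∈ {0, 1, -1}, and let (u_n) be any real sequence with u_0 = u0 satisfying (u_n - u_{n-1})/h + (1/ε²)(u_n³ - u_n) = 0 for all n ≥ 1. Then u_n = u0 for every n ≥ 0. -/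
lemma implicit_euler_aux (ε h x v : ℝ) (hε0 : 0 < ε) (hh0 : 0 < h) (hh1 : h ≤ ε ^ 2)
    (hv : v = 0 ∨ v = 1 ∨ v = -1)
    (heq : ε ^ 2 * (x - v) + h * (x ^ 3 - x) = 0) : x = v := by
  have hε2 : 0 < ε ^ 2 := by positivity
  rcases hv with rfl | rfl | rfl
  · have h2 : ε ^ 2 * x ^ 2 + h * (x ^ 4 - x ^ 2) = 0 := by linear_combination x * heq
    have hx4 : x ^ 4 ≤ 0 := by
      nlinarith [sq_nonneg x, mul_nonneg (sub_nonneg.mpr hh1) (sq_nonneg x)]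
    have hx4' : x ^ 4 = 0 := le_antisymm hx4 (by positivity)
    have := pow_eq_zero_iff (n := 4) (by norm_num) |>.mp hx4'
    simpa using this
  · have hq : 0 < h * x ^ 2 + h * x + ε ^ 2 := by
      nlinarith [mul_nonneg hh0.le (sq_nonneg (x + 1/2))]
    have hfac : (x - 1) * (h * x ^ 2 + h * x + ε ^ 2) = 0 := by linear_combination heq
    rcases mul_eq_zero.mp hfac with h1 | h2
    · linarith
    · linarith
  · have hq : 0 < h * x ^ 2 - h * x + ε ^ 2 := by
      nlinarith [mul_nonneg hh0.le (sq_nonneg (x - 1/2))]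
    have hfac : (x + 1) * (h * x ^ 2 - h * x + ε ^ 2) = 0 := by linear_combination heq
    rcases mul_eq_zero.mp hfac with h1 | h2
    · linarith
    · linarith

/-- If `u0 ∈ {0, 1, -1}` then any implicit Euler sequence with `0 < h ≤ ε²` is constant. -/
theorem implicit_euler_equilibria
    (ε : ℝ) (hε0 : 0 < ε) (hε1 : ε < 1)
    (h : ℝ) (hh0 : 0 < h) (hh1 : h ≤ ε ^ 2)
    (u0 : ℝ) (hu0 : u0 ∈ ({0, 1, -1} : Set ℝ))
    (u : ℕ → ℝ) (hinit : u 0 = u0)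
    (hrec : ∀ n : ℕ, (u (n + 1) - u n) / h + (1 / ε ^ 2) * ((u (n + 1)) ^ 3 - u (n + 1)) = 0) :
    ∀ n : ℕ, u n = u0 := by
  have hv : u0 = 0 ∨ u0 = 1 ∨ u0 = -1 := by simpa [Set.mem_insert_iff] using hu0
  intro n
  induction n with
  | zero => exact hinit
  | succ n ih =>
    have hne : ε ^ 2 ≠ 0 := by positivity
    have hne' : h ≠ 0 := ne_of_gt hh0
    have heq0 := hrec n
    rw [ih] at heq0
    have heq : ε ^ 2 * (u (n + 1) - u0) + h * ((u (n + 1)) ^ 3 - u (n + 1)) = 0 := by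
      field_simp at heq0
      linarith
    exact implicit_euler_aux ε h (u (n + 1)) u0 hε0 hh0 hh1 hv heq
end

section
/- Let ε ∈ (0,1), 0 < h ≤ ε², and u0 ∈ ℝ with u0 ∉ {0, 1, -1}. Let (u_n) be any real sequence with u_0 = u0 satisfying (u_n - u_{n-1})/h + (1/ε²)(u_n³ - u_n) = 0 for all n ≥ 1. Then: if u0 > 1 the sequence satisfies u_n > 1 for all n and is nonincreasing; if u0 < -1 it satisfies u_n < -1 for all n and is nondecreasing; if 0 < u0 < 1 it satisfies 0 < u_n < 1 for all n and is nondecreasing; if -1 < u0 < 0 it satisfies -1 < u_n < 0 for all n and is nonincreasing; and in all cases u_n converges to sign(u0) as n → ∞. -/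
/-!
With `c = h / ε²` the scheme reads `u n = implicitEulerPrev c (u (n + 1))`, where
`implicitEulerPrev c x = x + c (x³ - x)`. For `0 < c ≤ 1` this map is strictly increasing
with fixed points exactly `-1, 0, 1`, so every `u n` lies on the same side of each fixed point
as `u 0`. On each of the four resulting intervals `u n - u (n + 1) = c (u (n + 1)³ - u (n + 1))`
has a fixed sign, so `u` is monotone and bounded; its limit is a fixed point of the map, and
the interval containing `u 0` leaves only `sign u0`.
-/

open Filter Topology Function Set

section FixedPoints

variable {α : Type*} [LinearOrder α] {f : α → α} {u : ℕ → α} {a : α}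

theorem lt_iff_of_eq_comp_succ (hf : StrictMono f) (hu : ∀ n, u n = f (u (n + 1)))
    (ha : IsFixedPt f a) (n : ℕ) : u n < a ↔ u 0 < a := by
  induction n with
  | zero => rfl
  | succ n ih => rw [← ih, hu n, ← hf.lt_iff_lt, ha.eq]

theorem lt_iff_of_eq_comp_succ' (hf : StrictMono f) (hu : ∀ n, u n = f (u (n + 1)))
    (ha : IsFixedPt f a) (n : ℕ) : a < u n ↔ a < u 0 :=
  lt_iff_of_eq_comp_succ (α := αᵒᵈ) hf.dual hu ha n

end FixedPoints

section Limits

theorem isFixedPt_of_tendsto_of_eq_comp_succ {α : Type*} [TopologicalSpace α] [T2Space α]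
    {f : α → α} {u : ℕ → α} (hf : Continuous f) (hu : ∀ n, u n = f (u (n + 1)))
    {L : α} (hL : Tendsto u atTop (𝓝 L)) : IsFixedPt f L := by
  have hsucc : Tendsto (fun n => u (n + 1)) atTop (𝓝 L) := hL.comp (tendsto_add_atTop_nat 1)
  refine tendsto_nhds_unique ?_ hL
  exact ((hf.tendsto L).comp hsucc).congr fun n => (hu n).symm

variable {α : Type*} [ConditionallyCompleteLinearOrder α] [TopologicalSpace α] [OrderTopology α]
  {f : α → α} {u : ℕ → α} {b : α}

theorem Monotone.tendsto_of_eq_comp_succ (hmono : Monotone u) (hf : Continuous f)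
    (hu : ∀ n, u n = f (u (n + 1))) (hb : ∀ n, u n ≤ b)
    (hfix : ∀ x ∈ Icc (u 0) b, IsFixedPt f x → x = b) : Tendsto u atTop (𝓝 b) := by
  have hbdd : BddAbove (range u) := ⟨b, forall_mem_range.2 hb⟩
  have hlim := tendsto_atTop_ciSup hmono hbdd
  have hsup := isFixedPt_of_tendsto_of_eq_comp_succ hf hu hlim
  rwa [hfix _ ⟨le_ciSup hbdd 0, ciSup_le hb⟩ hsup] at hlim

theorem Antitone.tendsto_of_eq_comp_succ (hanti : Antitone u) (hf : Continuous f)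
    (hu : ∀ n, u n = f (u (n + 1))) (hb : ∀ n, b ≤ u n)
    (hfix : ∀ x ∈ Icc b (u 0), IsFixedPt f x → x = b) : Tendsto u atTop (𝓝 b) :=
  Monotone.tendsto_of_eq_comp_succ (α := αᵒᵈ) hanti.dual_right hf hu hb
    fun x hx => hfix x ⟨hx.2, hx.1⟩

end Limits

def implicitEulerPrev (c x : ℝ) : ℝ := x + c * (x ^ 3 - x)

theorem implicitEuler_step_iff {h δ x y : ℝ} (hh : h ≠ 0) :
    (y - x) / h + 1 / δ * (y ^ 3 - y) = 0 ↔ x = implicitEulerPrev (h / δ) y := by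
  have hscaled : h * ((y - x) / h + 1 / δ * (y ^ 3 - y)) = implicitEulerPrev (h / δ) y - x := by
    rw [mul_add, mul_div_cancel₀ _ hh, implicitEulerPrev]; ring
  rw [← mul_eq_zero_iff_left hh, hscaled, sub_eq_zero, eq_comm]

section ImplicitEulerPrev

variable {c x : ℝ}

theorem implicitEulerPrev_strictMono (hc0 : 0 ≤ c) (hc1 : c ≤ 1) :
    StrictMono (implicitEulerPrev c) := by
  intro a b hab
  have hq : 0 < a ^ 2 + a * b + b ^ 2 := by nlinarith [sq_nonneg (a + b)]
  have hslope : 0 < 1 - c + c * (a ^ 2 + a * b + b ^ 2) := by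
    rcases hc0.eq_or_lt with rfl | hc
    · norm_num
    · nlinarith [mul_pos hc hq]
  have hdiff : implicitEulerPrev c b - implicitEulerPrev c a
      = (b - a) * (1 - c + c * (a ^ 2 + a * b + b ^ 2)) := by
    rw [implicitEulerPrev, implicitEulerPrev]; ring
  exact sub_pos.1 (hdiff ▸ mul_pos (sub_pos.2 hab) hslope)

theorem continuous_implicitEulerPrev : Continuous (implicitEulerPrev c) := by
  unfold implicitEulerPrev; fun_prop

theorem isFixedPt_implicitEulerPrev_iff (hc : c ≠ 0) :
    IsFixedPt (implicitEulerPrev c) x ↔ x = 0 ∨ x = 1 ∨ x = -1 := by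
  have hfactor : x ^ 3 - x = x * ((x - 1) * (x + 1)) := by ring
  rw [IsFixedPt, implicitEulerPrev, add_eq_left, mul_eq_zero_iff_left hc, hfactor]
  simp only [mul_eq_zero, sub_eq_zero, add_eq_zero_iff_eq_neg]

theorem isFixedPt_implicitEulerPrev_zero : IsFixedPt (implicitEulerPrev c) 0 := by
  simp [IsFixedPt, implicitEulerPrev]

theorem isFixedPt_implicitEulerPrev_one : IsFixedPt (implicitEulerPrev c) 1 := by
  simp [IsFixedPt, implicitEulerPrev]

theorem isFixedPt_implicitEulerPrev_neg_one : IsFixedPt (implicitEulerPrev c) (-1) := by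
  norm_num [IsFixedPt, implicitEulerPrev]

theorem implicitEulerPrev_le_self_iff (hc : 0 < c) :
    implicitEulerPrev c x ≤ x ↔ x * (x ^ 2 - 1) ≤ 0 := by
  rw [implicitEulerPrev, add_le_iff_nonpos_right, ← neg_nonneg, ← mul_neg,
    mul_nonneg_iff_of_pos_left hc, neg_nonneg, show x ^ 3 - x = x * (x ^ 2 - 1) by ring]

theorem le_implicitEulerPrev_self_iff (hc : 0 < c) :
    x ≤ implicitEulerPrev c x ↔ 0 ≤ x * (x ^ 2 - 1) := by
  rw [implicitEulerPrev, le_add_iff_nonneg_right, mul_nonneg_iff_of_pos_left hc,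
    show x ^ 3 - x = x * (x ^ 2 - 1) by ring]

end ImplicitEulerPrev

section ImplicitEulerSequence

variable {c : ℝ} (hc0 : 0 < c) (hc1 : c ≤ 1) {u : ℕ → ℝ}
  (hu : ∀ n, u n = implicitEulerPrev c (u (n + 1)))
include hc0 hc1 hu

theorem implicitEuler_of_one_lt (h0 : 1 < u 0) :
    ((∀ n, 1 < u n) ∧ Antitone u) ∧ Tendsto u atTop (𝓝 1) := by
  have hF := implicitEulerPrev_strictMono hc0.le hc1
  have hgt n : 1 < u n := (lt_iff_of_eq_comp_succ' hF hu isFixedPt_implicitEulerPrev_one n).2 h0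
  have hanti : Antitone u := antitone_nat_of_succ_le fun n => by
    rw [hu n, le_implicitEulerPrev_self_iff hc0]
    exact mul_nonneg (by linarith [hgt (n + 1)]) (by nlinarith [hgt (n + 1)])
  refine ⟨⟨hgt, hanti⟩, hanti.tendsto_of_eq_comp_succ continuous_implicitEulerPrev hu
    (fun n => (hgt n).le) fun x ⟨hlo, hhi⟩ hxfix => ?_⟩
  rcases (isFixedPt_implicitEulerPrev_iff hc0.ne').1 hxfix with rfl | rfl | rfl <;>
    first | rfl | linarith

theorem implicitEuler_of_lt_neg_one (h0 : u 0 < -1) :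
    ((∀ n, u n < -1) ∧ Monotone u) ∧ Tendsto u atTop (𝓝 (-1)) := by
  have hF := implicitEulerPrev_strictMono hc0.le hc1
  have hlt n : u n < -1 := (lt_iff_of_eq_comp_succ hF hu isFixedPt_implicitEulerPrev_neg_one n).2 h0
  have hmono : Monotone u := monotone_nat_of_le_succ fun n => by
    rw [hu n, implicitEulerPrev_le_self_iff hc0]
    exact mul_nonpos_of_nonpos_of_nonneg (by linarith [hlt (n + 1)]) (by nlinarith [hlt (n + 1)])
  refine ⟨⟨hlt, hmono⟩, hmono.tendsto_of_eq_comp_succ continuous_implicitEulerPrev hu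
    (fun n => (hlt n).le) fun x ⟨hlo, hhi⟩ hxfix => ?_⟩
  rcases (isFixedPt_implicitEulerPrev_iff hc0.ne').1 hxfix with rfl | rfl | rfl <;>
    first | rfl | linarith

theorem implicitEuler_of_mem_Ioo_zero_one (h0 : 0 < u 0 ∧ u 0 < 1) :
    ((∀ n, 0 < u n ∧ u n < 1) ∧ Monotone u) ∧ Tendsto u atTop (𝓝 1) := by
  have hF := implicitEulerPrev_strictMono hc0.le hc1
  have hbounds n : 0 < u n ∧ u n < 1 :=
    ⟨(lt_iff_of_eq_comp_succ' hF hu isFixedPt_implicitEulerPrev_zero n).2 h0.1,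
      (lt_iff_of_eq_comp_succ hF hu isFixedPt_implicitEulerPrev_one n).2 h0.2⟩
  have hmono : Monotone u := monotone_nat_of_le_succ fun n => by
    rw [hu n, implicitEulerPrev_le_self_iff hc0]
    obtain ⟨hpos, hlt⟩ := hbounds (n + 1)
    exact mul_nonpos_of_nonneg_of_nonpos hpos.le (by nlinarith)
  refine ⟨⟨hbounds, hmono⟩, hmono.tendsto_of_eq_comp_succ continuous_implicitEulerPrev hu
    (fun n => (hbounds n).2.le) fun x ⟨hlo, hhi⟩ hxfix => ?_⟩
  rcases (isFixedPt_implicitEulerPrev_iff hc0.ne').1 hxfix with rfl | rfl | rfl <;>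
    first | rfl | linarith [h0.1]

theorem implicitEuler_of_mem_Ioo_neg_one_zero (h0 : -1 < u 0 ∧ u 0 < 0) :
    ((∀ n, -1 < u n ∧ u n < 0) ∧ Antitone u) ∧ Tendsto u atTop (𝓝 (-1)) := by
  have hF := implicitEulerPrev_strictMono hc0.le hc1
  have hbounds n : -1 < u n ∧ u n < 0 :=
    ⟨(lt_iff_of_eq_comp_succ' hF hu isFixedPt_implicitEulerPrev_neg_one n).2 h0.1,
      (lt_iff_of_eq_comp_succ hF hu isFixedPt_implicitEulerPrev_zero n).2 h0.2⟩
  have hanti : Antitone u := antitone_nat_of_succ_le fun n => by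
    rw [hu n, le_implicitEulerPrev_self_iff hc0]
    obtain ⟨hgt, hneg⟩ := hbounds (n + 1)
    exact mul_nonneg_of_nonpos_of_nonpos hneg.le (by nlinarith)
  refine ⟨⟨hbounds, hanti⟩, hanti.tendsto_of_eq_comp_succ continuous_implicitEulerPrev hu
    (fun n => (hbounds n).1.le) fun x ⟨hlo, hhi⟩ hxfix => ?_⟩
  rcases (isFixedPt_implicitEulerPrev_iff hc0.ne').1 hxfix with rfl | rfl | rfl <;>
    first | rfl | linarith [h0.2]

end ImplicitEulerSequence

theorem implicit_euler_monotone_convergence_general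
    (ε : ℝ)
    (h : ℝ) (hh0 : 0 < h) (hh1 : h ≤ ε ^ 2)
    (u0 : ℝ) (hu0 : u0 ∉ ({0, 1, -1} : Set ℝ))
    (u : ℕ → ℝ) (hinit : u 0 = u0)
    (hrec : ∀ n : ℕ, (u (n + 1) - u n) / h + (1 / ε ^ 2) * ((u (n + 1)) ^ 3 - u (n + 1)) = 0) :
    (1 < u0 → (∀ n : ℕ, 1 < u n) ∧ Antitone u) ∧
    (u0 < -1 → (∀ n : ℕ, u n < -1) ∧ Monotone u) ∧
    (0 < u0 ∧ u0 < 1 → (∀ n : ℕ, 0 < u n ∧ u n < 1) ∧ Monotone u) ∧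
    (-1 < u0 ∧ u0 < 0 → (∀ n : ℕ, -1 < u n ∧ u n < 0) ∧ Antitone u) ∧
    Filter.Tendsto u Filter.atTop (nhds (if 0 < u0 then (1 : ℝ) else -1)) := by
  subst hinit
  have hε : 0 < ε ^ 2 := hh0.trans_le hh1
  have hc0 : 0 < h / ε ^ 2 := div_pos hh0 hε
  have hc1 : h / ε ^ 2 ≤ 1 := (div_le_one hε).2 hh1
  have hu n : u n = implicitEulerPrev (h / ε ^ 2) (u (n + 1)) :=
    (implicitEuler_step_iff hh0.ne').1 (hrec n)
  have gt_one := implicitEuler_of_one_lt hc0 hc1 hu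
  have lt_neg_one := implicitEuler_of_lt_neg_one hc0 hc1 hu
  have in_Ioo_zero_one := implicitEuler_of_mem_Ioo_zero_one hc0 hc1 hu
  have in_Ioo_neg_one_zero := implicitEuler_of_mem_Ioo_neg_one_zero hc0 hc1 hu
  refine ⟨fun h0 => (gt_one h0).1, fun h0 => (lt_neg_one h0).1, fun h0 => (in_Ioo_zero_one h0).1,
    fun h0 => (in_Ioo_neg_one_zero h0).1, ?_⟩
  simp only [Set.mem_insert_iff, Set.mem_singleton_iff, not_or] at hu0
  obtain ⟨hne0, hne1, hne_neg_one⟩ := hu0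
  split_ifs with hpos
  · rcases lt_or_gt_of_ne hne1 with hlt | hgt
    exacts [(in_Ioo_zero_one ⟨hpos, hlt⟩).2, (gt_one hgt).2]
  · have hneg : u 0 < 0 := lt_of_le_of_ne (not_lt.1 hpos) hne0
    rcases lt_or_gt_of_ne hne_neg_one with hlt | hgt
    exacts [(lt_neg_one hlt).2, (in_Ioo_neg_one_zero ⟨hgt, hneg⟩).2]

/-- Monotone convergence to the correct steady state for the implicit Euler scheme
with `0 < h ≤ ε²` and `u0 ∉ {0, 1, -1}`. -/
theorem implicit_euler_monotone_convergence
    (ε : ℝ) (hε0 : 0 < ε) (hε1 : ε < 1)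
    (h : ℝ) (hh0 : 0 < h) (hh1 : h ≤ ε ^ 2)
    (u0 : ℝ) (hu0 : u0 ∉ ({0, 1, -1} : Set ℝ))
    (u : ℕ → ℝ) (hinit : u 0 = u0)
    (hrec : ∀ n : ℕ, (u (n + 1) - u n) / h + (1 / ε ^ 2) * ((u (n + 1)) ^ 3 - u (n + 1)) = 0) :
    (1 < u0 → (∀ n : ℕ, 1 < u n) ∧ Antitone u) ∧
    (u0 < -1 → (∀ n : ℕ, u n < -1) ∧ Monotone u) ∧
    (0 < u0 ∧ u0 < 1 → (∀ n : ℕ, 0 < u n ∧ u n < 1) ∧ Monotone u) ∧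
    (-1 < u0 ∧ u0 < 0 → (∀ n : ℕ, -1 < u n ∧ u n < 0) ∧ Antitone u) ∧
    Filter.Tendsto u Filter.atTop (nhds (if 0 < u0 then (1 : ℝ) else -1)) :=
  implicit_euler_monotone_convergence_general ε h hh0 hh1 u0 hu0 u hinit hrec
end

section
/- Let ε ∈ (0,1), let u0 ∈ ℝ with |u0| > 1, and let 0 < h ≤ 2ε²/(u0² + |u0|). Let (u_n) be any real sequence with u_0 = u0 satisfying the Crank-Nicolson recurrence (u_n - u_{n-1})/h + (1/(2ε²))(u_n³ - u_n) + (1/(2ε²))(u_{n-1}³ - u_{n-1}) = 0 for all n ≥ 1. Then: if u0 > 1, u_n ≥ 1 for all n and (u_n) is nonincreasing; if u0 < -1, u_n ≤ -1 for all n and (u_n) is nondecreasing; and in both cases u_n converges to sign(u0) as n → ∞. -/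
open Filter

lemma cn_limit_one (L : ℝ) (h1 : 1 ≤ L) (h2 : L^3 - L = 0) : L = 1 := by
  nlinarith [mul_nonneg (sub_nonneg.2 h1) (show (0:ℝ) ≤ L^2 + L - 2 by nlinarith), sq_nonneg L]

lemma cn_aux (ε u0 h : ℝ) (hε0 : 0 < ε) (hu0 : 1 < u0)
    (hh0 : 0 < h) (hh1 : h ≤ 2 * ε ^ 2 / (u0 ^ 2 + u0))
    (u : ℕ → ℝ) (hinit : u 0 = u0)
    (hrec : ∀ n : ℕ, (u (n + 1) - u n) / h
      + (1 / (2 * ε ^ 2)) * ((u (n + 1)) ^ 3 - u (n + 1))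
      + (1 / (2 * ε ^ 2)) * ((u n) ^ 3 - u n) = 0) :
    (∀ n : ℕ, 1 ≤ u n ∧ u n ≤ u0) ∧ Antitone u ∧
      Tendsto u atTop (nhds 1) := by
  have hε2 : (0:ℝ) < 2 * ε ^ 2 := by positivity
  obtain ⟨l, hl⟩ : ∃ l : ℝ, l = h / (2 * ε ^ 2) := ⟨_, rfl⟩
  have hl0 : 0 < l := by rw [hl]; positivity
  have hsum : (0:ℝ) < u0 ^ 2 + u0 := by nlinarith
  have hl1 : l * (u0 ^ 2 + u0) ≤ 1 := by
    rw [hl, div_mul_eq_mul_div, div_le_one hε2]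
    calc h * (u0 ^ 2 + u0) ≤ (2 * ε ^ 2 / (u0 ^ 2 + u0)) * (u0 ^ 2 + u0) := by
          exact mul_le_mul_of_nonneg_right hh1 hsum.le
      _ = 2 * ε ^ 2 := by field_simp
  have hlhalf : l ≤ 1 / 2 := by nlinarith
  have h3 : h ≠ 0 := ne_of_gt hh0
  have h4 : (2 * ε ^ 2) ≠ 0 := ne_of_gt hε2
  have key : ∀ n : ℕ, u (n+1) - u n + l * ((u (n+1))^3 - u (n+1))
      + l * ((u n)^3 - u n) = 0 := by
    intro n
    have h1 := hrec n
    have e : u (n+1) - u n + l * ((u (n+1))^3 - u (n+1)) + l * ((u n)^3 - u n)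
        = h * ((u (n + 1) - u n) / h
          + (1 / (2 * ε ^ 2)) * ((u (n + 1)) ^ 3 - u (n + 1))
          + (1 / (2 * ε ^ 2)) * ((u n) ^ 3 - u n)) := by
      rw [hl]; field_simp
    rw [e, h1, mul_zero]
  -- cube positivity helper
  have cube : ∀ x : ℝ, 1 ≤ x → 0 ≤ x^3 - x := by
    intro x hx
    nlinarith [mul_nonneg (mul_nonneg (sub_nonneg.2 hx) (by linarith : (0:ℝ) ≤ x + 1)) (by linarith : (0:ℝ) ≤ x)]
  -- one-step lemma
  have onestep : ∀ n : ℕ, 1 ≤ u n → u n ≤ u0 → 1 ≤ u (n+1) ∧ u (n+1) ≤ u n := by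
    intro n ha1 ha2
    set a := u n
    set b := u (n+1)
    have E := key n
    have hfac : l * (a^2 + a) ≤ 1 := by nlinarith
    have hA : 1 ≤ a - l * (a^3 - a) := by
      nlinarith [mul_nonneg (sub_nonneg.2 ha1) (sub_nonneg.2 hfac)]
    have hpos : 0 < 1 + l * (b^2 + b) := by nlinarith [sq_nonneg (2*b+1)]
    have hb1 : 1 ≤ b := by nlinarith
    have hcube : 0 ≤ l * (a^3 - a) := mul_nonneg hl0.le (cube a ha1)
    have hba : b ≤ a := by
      nlinarith [mul_nonneg hl0.le (sq_nonneg (a+b)), mul_nonneg hl0.le (sq_nonneg a),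
        mul_nonneg hl0.le (sq_nonneg b)]
    exact ⟨hb1, hba⟩
  have bound : ∀ n : ℕ, 1 ≤ u n ∧ u n ≤ u0 := by
    intro n
    induction n with
    | zero => rw [hinit]; exact ⟨hu0.le, le_refl _⟩
    | succ n ih =>
      obtain ⟨h1, h2⟩ := onestep n ih.1 ih.2
      exact ⟨h1, h2.trans ih.2⟩
  have step : ∀ n : ℕ, u (n+1) ≤ u n := fun n =>
    (onestep n (bound n).1 (bound n).2).2
  have hmono : Antitone u := antitone_nat_of_succ_le step
  have hbdd : BddBelow (Set.range u) := ⟨1, by rintro x ⟨n, rfl⟩; exact (bound n).1⟩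
  obtain ⟨L, hLdef⟩ : ∃ L : ℝ, L = ⨅ n, u n := ⟨_, rfl⟩
  have ht : Tendsto u atTop (nhds L) := hLdef ▸ tendsto_atTop_ciInf hmono hbdd
  have hL1 : 1 ≤ L := hLdef ▸ le_ciInf fun n => (bound n).1
  have ht2 : Tendsto (fun n => u (n+1)) atTop (nhds L) :=
    ht.comp (tendsto_add_atTop_nat 1)
  have T : Tendsto (fun n => u (n+1) - u n + l * ((u (n+1))^3 - u (n+1))
      + l * ((u n)^3 - u n)) atTop
      (nhds (L - L + l * (L^3 - L) + l * (L^3 - L))) :=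
    ((ht2.sub ht).add (((ht2.pow 3).sub ht2).const_mul l)).add
      (((ht.pow 3).sub ht).const_mul l)
  have T0 : Tendsto (fun _ : ℕ => (0:ℝ)) atTop
      (nhds (L - L + l * (L^3 - L) + l * (L^3 - L))) := by
    have e : (fun n => u (n+1) - u n + l * ((u (n+1))^3 - u (n+1))
        + l * ((u n)^3 - u n)) = fun _ : ℕ => (0:ℝ) := funext key
    rwa [e] at T
  have heq : (0:ℝ) = L - L + l * (L^3 - L) + l * (L^3 - L) :=
    tendsto_nhds_unique tendsto_const_nhds T0
  have hz : l * (L^3 - L) = 0 := by linarith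
  have hLcube : L^3 - L = 0 := (mul_eq_zero.mp hz).resolve_left hl0.ne'
  have hLeq : L = 1 := cn_limit_one L hL1 hLcube
  rw [hLeq] at ht
  exact ⟨bound, hmono, ht⟩

/-- Crank-Nicolson with `|u0| > 1` and `0 < h ≤ 2ε²/(u0² + |u0|)`: the numerical solution
stays beyond `±1`, is monotone, and converges to `sign u0`. -/
theorem crank_nicolson_monotone_big_initial
    (ε : ℝ) (hε0 : 0 < ε) (hε1 : ε < 1)
    (u0 : ℝ) (hu0 : 1 < |u0|)
    (h : ℝ) (hh0 : 0 < h) (hh1 : h ≤ 2 * ε ^ 2 / (u0 ^ 2 + |u0|))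
    (u : ℕ → ℝ) (hinit : u 0 = u0)
    (hrec : ∀ n : ℕ, (u (n + 1) - u n) / h
      + (1 / (2 * ε ^ 2)) * ((u (n + 1)) ^ 3 - u (n + 1))
      + (1 / (2 * ε ^ 2)) * ((u n) ^ 3 - u n) = 0) :
    (1 < u0 → (∀ n : ℕ, 1 ≤ u n) ∧ Antitone u) ∧
    (u0 < -1 → (∀ n : ℕ, u n ≤ -1) ∧ Monotone u) ∧
    Filter.Tendsto u Filter.atTop (nhds (if 0 < u0 then (1 : ℝ) else -1)) := by
  rcases lt_abs.mp hu0 with hpos | hneg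
  · -- u0 > 1
    have habs : |u0| = u0 := abs_of_pos (by linarith)
    have hh1' : h ≤ 2 * ε ^ 2 / (u0 ^ 2 + u0) := by rwa [habs] at hh1
    obtain ⟨bound, hanti, htend⟩ := cn_aux ε u0 h hε0 hpos hh0 hh1' u hinit hrec
    refine ⟨fun _ => ⟨fun n => (bound n).1, hanti⟩, fun hc => absurd hc (by linarith), ?_⟩
    rw [if_pos (by linarith : (0:ℝ) < u0)]
    exact htend
  · -- u0 < -1, i.e. 1 < -u0
    have hneg' : u0 < -1 := by linarith
    have hrec' : ∀ n : ℕ, ((-u (n + 1)) - (-u n)) / h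
        + (1 / (2 * ε ^ 2)) * ((-u (n + 1)) ^ 3 - (-u (n + 1)))
        + (1 / (2 * ε ^ 2)) * ((-u n) ^ 3 - (-u n)) = 0 := by
      intro n
      linear_combination -hrec n
    have hh1' : h ≤ 2 * ε ^ 2 / ((-u0) ^ 2 + (-u0)) := by
      have e : (-u0) ^ 2 + (-u0) = u0 ^ 2 + |u0| := by
        rw [abs_of_neg (by linarith : u0 < 0)]; ring
      rwa [e]
    obtain ⟨bound, hanti, htend⟩ := cn_aux ε (-u0) h hε0 hneg hh0 hh1'
      (fun n => -u n) (show -u 0 = -u0 by rw [hinit]) hrec'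
    refine ⟨fun hc => absurd hc (by linarith), fun _ => ⟨fun n => by linarith [(bound n).1], ?_⟩, ?_⟩
    · intro a b hab
      have := hanti hab
      simp only at this
      linarith
    · rw [if_neg (by linarith : ¬ (0:ℝ) < u0)]
      have := htend.neg
      simp only [neg_neg] at this
      exact this
end

section
/- Let ε ∈ (0,1), let u0 ∈ ℝ with 0 < |u0| < 1, and let 0 < h ≤ ε². Let (u_n) be any real sequence with u_0 = u0 satisfying the Crank-Nicolson recurrence (u_n - u_{n-1})/h + (1/(2ε²))(u_n³ - u_n) + (1/(2ε²))(u_{n-1}³ - u_{n-1}) = 0 for all n ≥ 1. Then: if 0 < u0 < 1, 0 < u_n ≤ 1 for all n and (u_n) is nondecreasing; if -1 < u0 < 0, -1 ≤ u_n < 0 for all n and (u_n) is nonincreasing; and in both cases u_n converges to sign(u0) as n → ∞. -/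
open Filter Topology

lemma cn_step (c x w : ℝ) (hc0 : 0 < c) (hc : c ≤ 1/2) (hw0 : 0 < w) (hw1 : w ≤ 1)
    (hrel : x - w + c * (x ^ 3 - x) + c * (w ^ 3 - w) = 0) : w ≤ x ∧ x ≤ 1 := by
  have hS : 0 ≤ x ^ 2 + x * w + w ^ 2 := by nlinarith [sq_nonneg (x + w), sq_nonneg x, sq_nonneg w]
  constructor
  · by_contra hlt
    push_neg at hlt
    have h1 : 0 ≤ c * ((w - x) * (x ^ 2 + x * w + w ^ 2)) :=
      mul_nonneg hc0.le (mul_nonneg (by linarith) hS)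
    have h2 : 0 ≤ c * (w * (1 - w ^ 2)) :=
      mul_nonneg hc0.le (mul_nonneg hw0.le (by nlinarith))
    nlinarith [h1, h2]
  · by_contra hgt
    push_neg at hgt
    have h1 : 0 < (x - 1) * ((1 - c) + c * (x ^ 2 + x + 1)) := by
      apply mul_pos (by linarith)
      have : 0 ≤ c * (x ^ 2 + x + 1) := mul_nonneg hc0.le (by nlinarith)
      linarith
    have h2 : 0 ≤ (1 - w) * (1 - c * (w * (1 + w))) := by
      apply mul_nonneg (by linarith)
      have : c * (w * (1 + w)) ≤ (1/2) * (1 * 2) := by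
        apply mul_le_mul hc (by nlinarith) (by positivity) (by norm_num)
      linarith
    nlinarith [h1, h2]

lemma cn_pos (c : ℝ) (hc0 : 0 < c) (hc : c ≤ 1/2) (u : ℕ → ℝ)
    (h0 : 0 < u 0) (h1 : u 0 ≤ 1)
    (hrel : ∀ n, u (n+1) - u n + c * ((u (n+1)) ^ 3 - u (n+1)) + c * ((u n) ^ 3 - u n) = 0) :
    (∀ n, 0 < u n ∧ u n ≤ 1) ∧ Monotone u ∧ Tendsto u atTop (nhds 1) := by
  have key : ∀ n, 0 < u n ∧ u n ≤ 1 := by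
    intro n
    induction n with
    | zero => exact ⟨h0, h1⟩
    | succ k ih =>
      obtain ⟨hs1, hs2⟩ := cn_step c (u (k+1)) (u k) hc0 hc ih.1 ih.2 (hrel k)
      exact ⟨lt_of_lt_of_le ih.1 hs1, hs2⟩
  have mono : Monotone u := monotone_nat_of_le_succ fun n =>
    (cn_step c (u (n+1)) (u n) hc0 hc (key n).1 (key n).2 (hrel n)).1
  refine ⟨key, mono, ?_⟩
  have hbdd : BddAbove (Set.range u) := ⟨1, by rintro x ⟨n, rfl⟩; exact (key n).2⟩
  set L := ⨆ n, u n with hLdef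
  have hL : Tendsto u atTop (nhds L) := tendsto_atTop_ciSup mono hbdd
  have hL0 : 0 < L := lt_of_lt_of_le h0 (le_ciSup hbdd 0)
  have hL1 : L ≤ 1 := ciSup_le fun n => (key n).2
  have h2 : Tendsto (fun n => u (n+1)) atTop (nhds L) := (tendsto_add_atTop_iff_nat 1).2 hL
  have h3 : Tendsto (fun n => u (n+1) - u n + c * ((u (n+1)) ^ 3 - u (n+1))
      + c * ((u n) ^ 3 - u n)) atTop
      (nhds (L - L + c * (L ^ 3 - L) + c * (L ^ 3 - L))) :=
    (((h2.sub hL).add (((h2.pow 3).sub h2).const_mul c)).add (((hL.pow 3).sub hL).const_mul c))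
  have h4 : Tendsto (fun n => u (n+1) - u n + c * ((u (n+1)) ^ 3 - u (n+1))
      + c * ((u n) ^ 3 - u n)) atTop (nhds 0) := by
    simp only [hrel]; exact tendsto_const_nhds
  have heq : L - L + c * (L ^ 3 - L) + c * (L ^ 3 - L) = 0 := tendsto_nhds_unique h3 h4
  have h5 : L ^ 3 - L = 0 := by
    have h6 : c * (L ^ 3 - L) = 0 := by linarith
    exact (mul_eq_zero.1 h6).resolve_left hc0.ne'
  have hLeq : L = 1 := by
    refine le_antisymm hL1 ?_
    by_contra hlt
    push_neg at hlt
    have : 0 < (1 - L) * L * (1 + L) := by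
      apply mul_pos (mul_pos (by linarith) hL0) (by linarith)
    nlinarith [this]
  rwa [hLeq] at hL

/-- Crank-Nicolson with `0 < |u0| < 1` and `0 < h ≤ ε²`: the numerical solution stays
between `0` and `sign u0`, is monotone, and converges to `sign u0`. -/
theorem crank_nicolson_monotone_small_initial
    (ε : ℝ) (hε0 : 0 < ε) (hε1 : ε < 1)
    (u0 : ℝ) (hu0 : 0 < |u0|) (hu0' : |u0| < 1)
    (h : ℝ) (hh0 : 0 < h) (hh1 : h ≤ ε ^ 2)
    (u : ℕ → ℝ) (hinit : u 0 = u0)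
    (hrec : ∀ n : ℕ, (u (n + 1) - u n) / h
      + (1 / (2 * ε ^ 2)) * ((u (n + 1)) ^ 3 - u (n + 1))
      + (1 / (2 * ε ^ 2)) * ((u n) ^ 3 - u n) = 0) :
    (0 < u0 ∧ u0 < 1 → (∀ n : ℕ, 0 < u n ∧ u n ≤ 1) ∧ Monotone u) ∧
    (-1 < u0 ∧ u0 < 0 → (∀ n : ℕ, -1 ≤ u n ∧ u n < 0) ∧ Antitone u) ∧
    Filter.Tendsto u Filter.atTop (nhds (if 0 < u0 then (1 : ℝ) else -1)) := by
  have hε2 : (0:ℝ) < ε ^ 2 := by positivity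
  set c := h / (2 * ε ^ 2) with hcdef
  have hc0 : 0 < c := by positivity
  have hc : c ≤ 1/2 := by
    rw [hcdef, div_le_iff₀ (by positivity)]; nlinarith
  have hrel : ∀ n, u (n+1) - u n + c * ((u (n+1)) ^ 3 - u (n+1))
      + c * ((u n) ^ 3 - u n) = 0 := by
    intro n
    have H := hrec n
    calc u (n+1) - u n + c * ((u (n+1)) ^ 3 - u (n+1)) + c * ((u n) ^ 3 - u n)
        = ((u (n + 1) - u n) / h + (1 / (2 * ε ^ 2)) * ((u (n + 1)) ^ 3 - u (n + 1))
          + (1 / (2 * ε ^ 2)) * ((u n) ^ 3 - u n)) * h := by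
          rw [hcdef]; field_simp
      _ = 0 := by rw [H, zero_mul]
  rcases lt_or_gt_of_ne (fun h' : u0 = 0 => by simp [h'] at hu0) with hneg | hpos
  · -- u0 < 0
    have hu0l : -1 < u0 := by rw [abs_of_neg hneg] at hu0'; linarith
    have hvrel : ∀ n, (fun n => -u n) (n+1) - (fun n => -u n) n
        + c * (((fun n => -u n) (n+1)) ^ 3 - (fun n => -u n) (n+1))
        + c * (((fun n => -u n) n) ^ 3 - (fun n => -u n) n) = 0 := by
      intro n
      show -u (n+1) - -u n + c * ((-u (n+1)) ^ 3 - -u (n+1)) + c * ((-u n) ^ 3 - -u n) = 0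
      linear_combination -(hrel n)
    obtain ⟨hbnd, hmono, htend⟩ := cn_pos c hc0 hc (fun n => -u n)
      (by show (0:ℝ) < -u 0; rw [hinit]; linarith)
      (by show -u 0 ≤ (1:ℝ); rw [hinit]; linarith) hvrel
    refine ⟨fun hpos' => absurd hpos'.1 (not_lt.2 hneg.le), fun _ => ?_, ?_⟩
    · constructor
      · intro n
        have hb : 0 < -u n ∧ -u n ≤ 1 := hbnd n
        exact ⟨by linarith [hb.2], by linarith [hb.1]⟩
      · intro a b hab
        have h' : -u a ≤ -u b := hmono hab
        linarith
    · rw [if_neg (not_lt.2 hneg.le)]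
      have htend' : Tendsto (fun n => -u n) atTop (nhds 1) := htend
      have : Tendsto (fun n => -(-u n)) atTop (nhds (-1)) := htend'.neg
      simpa using this
  · -- 0 < u0
    rw [abs_of_pos hpos] at hu0'
    obtain ⟨hbnd, hmono, htend⟩ := cn_pos c hc0 hc u
      (by rw [hinit]; exact hpos) (by rw [hinit]; linarith) hrel
    refine ⟨fun _ => ⟨hbnd, hmono⟩, fun hneg' => absurd hneg'.2 (not_lt.2 hpos.le), ?_⟩
    rw [if_pos hpos]; exact htend
end

section
/- Let ε ∈ (0,1), let u0 ∈ ℝ with u0 ∉ {0, 1, -1}, and suppose 0 < h ≤ h*, where h* = 2ε²/(u0² + |u0|) if |u0| > 1 and h* = ε² if 0 < |u0| < 1. Let (u_n) be any real sequence with u_0 = u0 satisfying the Crank-Nicolson recurrence (u_n - u_{n-1})/h + (1/(2ε²))(u_n³ - u_n) + (1/(2ε²))(u_{n-1}³ - u_{n-1}) = 0 for all n ≥ 1. Then E(u_n) ≤ E(u_{n-1}) for all n ≥ 1, where E(v) = (v² - 1)²/(4ε²). -/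
lemma cn_step_nonneg (c a b : ℝ) (hc0 : 0 < c) (hc : c ≤ 1/2)
    (ha : 0 ≤ a) (hinv : c * (a^2 + a) ≤ 1)
    (hrec : b - a + c * (b^3 - b + a^3 - a) = 0) :
    (b^2 - 1)^2 ≤ (a^2 - 1)^2 ∧ 0 ≤ b ∧ c * (b^2 + b) ≤ 1 := by
  have hK : (0:ℝ) < (1 - c) + c * (a^2 + a*b + b^2) := by
    nlinarith [sq_nonneg (b + a/2), sq_nonneg a, sq_nonneg b]
  have hK' : (0:ℝ) < (1 - c) + c * (1 + b + b^2) := by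
    nlinarith [sq_nonneg (b + 1/2)]
  rcases le_or_gt a 1 with h1 | h1
  · -- a ∈ [0,1]
    have hba : a ≤ b := by
      nlinarith [mul_nonneg (mul_nonneg hc0.le ha) (by nlinarith : (0:ℝ) ≤ 1 - a^2), hK]
    have hb1 : b ≤ 1 := by
      nlinarith [mul_nonneg (by nlinarith : (0:ℝ) ≤ 1 - a)
        (by nlinarith : (0:ℝ) ≤ 1 - c*a*(1+a)), hK']
    refine ⟨?_, le_trans ha hba, by nlinarith⟩
    nlinarith [mul_nonneg (by nlinarith : (0:ℝ) ≤ b^2 - a^2) (by nlinarith : (0:ℝ) ≤ 2 - a^2 - b^2)]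
  · -- a > 1
    have hba : b ≤ a := by
      nlinarith [mul_nonneg (mul_nonneg hc0.le ha) (by nlinarith : (0:ℝ) ≤ a^2 - 1), hK]
    have hb1 : 1 ≤ b := by
      nlinarith [mul_nonneg (by nlinarith : (0:ℝ) ≤ a - 1)
        (by nlinarith : (0:ℝ) ≤ 1 - c*(a^2+a)), hK']
    refine ⟨?_, by linarith, by nlinarith⟩
    nlinarith [mul_nonneg (by nlinarith : (0:ℝ) ≤ a^2 - b^2) (by nlinarith : (0:ℝ) ≤ a^2 + b^2 - 2)]

lemma cn_step_s11 (c a b : ℝ) (hc0 : 0 < c) (hc : c ≤ 1/2)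
    (hinv : c * (a^2 + |a|) ≤ 1)
    (hrec : b - a + c * (b^3 - b + a^3 - a) = 0) :
    (b^2 - 1)^2 ≤ (a^2 - 1)^2 ∧ c * (b^2 + |b|) ≤ 1 := by
  rcases le_or_gt 0 a with ha | ha
  · rw [abs_of_nonneg ha] at hinv
    obtain ⟨h1, hb0, h2⟩ := cn_step_nonneg c a b hc0 hc ha hinv hrec
    rw [abs_of_nonneg hb0]
    exact ⟨h1, h2⟩
  · rw [abs_of_neg ha] at hinv
    have hinv' : c * ((-a)^2 + (-a)) ≤ 1 := by nlinarith [hinv]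
    have hrec' : (-b) - (-a) + c * ((-b)^3 - (-b) + (-a)^3 - (-a)) = 0 := by
      linear_combination -hrec
    obtain ⟨h1, hb0, h2⟩ := cn_step_nonneg c (-a) (-b) hc0 hc (by linarith) hinv' hrec'
    have habs : |b| = -b := abs_of_nonpos (by linarith)
    rw [habs]
    constructor
    · nlinarith [h1]
    · nlinarith [h2]



/-- Energy stability of the Crank-Nicolson scheme for `0 < h ≤ h*`, where
`h* = 2ε²/(u0² + |u0|)` if `|u0| > 1` and `h* = ε²` if `0 < |u0| < 1`. -/
theorem crank_nicolson_energy_stability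
    (ε : ℝ) (hε0 : 0 < ε) (hε1 : ε < 1)
    (u0 : ℝ) (hu0 : u0 ∉ ({0, 1, -1} : Set ℝ))
    (h : ℝ) (hh0 : 0 < h)
    (hh1 : h ≤ if 1 < |u0| then 2 * ε ^ 2 / (u0 ^ 2 + |u0|) else ε ^ 2)
    (u : ℕ → ℝ) (hinit : u 0 = u0)
    (hrec : ∀ n : ℕ, (u (n + 1) - u n) / h
      + (1 / (2 * ε ^ 2)) * ((u (n + 1)) ^ 3 - u (n + 1))
      + (1 / (2 * ε ^ 2)) * ((u n) ^ 3 - u n) = 0) :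
    ∀ n : ℕ, ((u (n + 1)) ^ 2 - 1) ^ 2 / (4 * ε ^ 2) ≤ ((u n) ^ 2 - 1) ^ 2 / (4 * ε ^ 2) := by
  have hε2 : (0:ℝ) < ε ^ 2 := by positivity
  set c : ℝ := h / (2 * ε ^ 2) with hcdef
  have hc0 : 0 < c := by positivity
  -- convert recurrence
  have hne : h ≠ 0 := ne_of_gt hh0
  have hrec' : ∀ n : ℕ, u (n+1) - u n + c * ((u (n+1))^3 - u (n+1) + (u n)^3 - u n) = 0 := by
    intro n
    rw [hcdef]
    linear_combination h * hrec n - div_mul_cancel₀ (u (n+1) - u n) hne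
  -- initial invariant and c ≤ 1/2
  have key : c ≤ 1/2 ∧ c * (u0^2 + |u0|) ≤ 1 := by
    by_cases hcase : 1 < |u0|
    · rw [if_pos hcase] at hh1
      have hD : (0:ℝ) < u0^2 + |u0| := by nlinarith [abs_nonneg u0]
      have h3 : h * (u0^2 + |u0|) ≤ 2 * ε ^ 2 := (le_div_iff₀ hD).mp hh1
      have h4 : c * (u0^2 + |u0|) ≤ 1 := by
        rw [hcdef, div_mul_eq_mul_div, div_le_one (by positivity)]
        linarith
      have hsq : (1:ℝ) < u0^2 := by nlinarith [sq_abs u0]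
      refine ⟨?_, h4⟩
      nlinarith [h4, hc0]
    · rw [if_neg hcase] at hh1
      push_neg at hcase
      have hc12 : c ≤ 1/2 := by
        rw [hcdef, div_le_iff₀ (by positivity)]
        linarith
      have hsq : u0^2 ≤ 1 := by nlinarith [sq_abs u0, abs_nonneg u0]
      exact ⟨hc12, by nlinarith [abs_nonneg u0]⟩
  obtain ⟨hc12, hinv0⟩ := key
  have inv : ∀ n : ℕ, c * ((u n)^2 + |u n|) ≤ 1 := by
    intro n
    induction n with
    | zero => rw [hinit]; exact hinv0
    | succ k ih => exact (cn_step_s11 c (u k) (u (k+1)) hc0 hc12 ih (hrec' k)).2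
  intro n
  have hE := (cn_step_s11 c (u n) (u (n+1)) hc0 hc12 (inv n) (hrec' n)).1
  have h4 : (0:ℝ) < 4 * ε ^ 2 := by positivity
  gcongr
end

section
/- Let ε ∈ (0,1), let u0 ∈ ℝ with |u0| > 1, and let 0 < h ≤ 4ε²/(u0² + 2|u0| + 1). Let (u_n) be any real sequence with u_0 = u0 satisfying the modified Crank-Nicolson recurrence (u_n - u_{n-1})/h + (1/ε²)·((u_n + u_{n-1})/2)·((u_n² + u_{n-1}²)/2 - 1) = 0 for all n ≥ 1. Then: if u0 > 1, u_n ≥ 1 for all n and (u_n) is nonincreasing; if u0 < -1, u_n ≤ -1 for all n and (u_n) is nondecreasing; and in both cases u_n converges to sign(u0) as n → ∞. -/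
open Filter


lemma cn_step_s12 (ε h a b : ℝ) (hε : 0 < ε) (hh : 0 < h) (ha : 1 ≤ a)
    (hb : h * (1 + a)^2 ≤ 4 * ε^2)
    (heq : (b - a)/h + (1/ε^2) * ((b+a)/2) * ((b^2+a^2)/2 - 1) = 0) :
    1 ≤ b ∧ b ≤ a := by
  have hε2 : (0:ℝ) < ε^2 := by positivity
  have ha2 : (0:ℝ) ≤ a^2 - 1 := by nlinarith
  have key : 4*ε^2*(b-a) + h*(b+a)*(b^2+a^2-2) = 0 := by
    field_simp at heq
    nlinarith [heq]
  have fact1 : (b-a)*(4*ε^2 + h*((a+b)^2 + 2*(a^2-1))) = -(4*h*a*(a^2-1)) := by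
    linear_combination key
  have fact2 : (b-1)*(4*ε^2 + h*(b^2+b+a*b+a+a^2-1)) = (a-1)*(4*ε^2 - h*(1+a)^2) := by
    linear_combination key
  have hfac1 : 0 < 4*ε^2 + h*((a+b)^2 + 2*(a^2-1)) := by
    have h1 : (0:ℝ) ≤ (a+b)^2 + 2*(a^2-1) := by nlinarith [sq_nonneg (a+b)]
    nlinarith [mul_nonneg hh.le h1]
  have hfac2 : 0 < 4*ε^2 + h*(b^2+b+a*b+a+a^2-1) := by
    have h1 : (0:ℝ) ≤ b^2+b+a*b+a+a^2-1 := by nlinarith [sq_nonneg (2*b+1+a)]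
    nlinarith [mul_nonneg hh.le h1]
  have hrhs1 : -(4*h*a*(a^2-1)) ≤ 0 := by
    nlinarith [mul_nonneg (mul_nonneg hh.le (le_trans zero_le_one ha)) ha2]
  have hrhs2 : 0 ≤ (a-1)*(4*ε^2 - h*(1+a)^2) := by
    nlinarith [mul_nonneg (sub_nonneg.2 ha) (sub_nonneg.2 hb)]
  constructor
  · by_contra hc
    push_neg at hc
    nlinarith [mul_neg_of_neg_of_pos (by linarith : b - 1 < 0) hfac2]
  · by_contra hc
    push_neg at hc
    nlinarith [mul_pos (by linarith : 0 < b - a) hfac1]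

lemma cn_pos_s12 (ε u0 h : ℝ) (hε0 : 0 < ε) (hu0 : 1 < u0) (hh0 : 0 < h)
    (hh1 : h * (1 + u0)^2 ≤ 4 * ε^2) (u : ℕ → ℝ) (hinit : u 0 = u0)
    (hrec : ∀ n : ℕ, (u (n + 1) - u n) / h
      + (1 / ε ^ 2) * ((u (n + 1) + u n) / 2) * (((u (n + 1)) ^ 2 + (u n) ^ 2) / 2 - 1) = 0) :
    (∀ n, 1 ≤ u n ∧ u n ≤ u0) ∧ Antitone u ∧ Tendsto u atTop (nhds 1) := by
  have hinv : ∀ n, 1 ≤ u n ∧ u n ≤ u0 := by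
    intro n
    induction n with
    | zero => rw [hinit]; exact ⟨hu0.le, le_refl _⟩
    | succ k ih =>
      have hbk : h * (1 + u k)^2 ≤ 4 * ε^2 := by
        have : (1 + u k)^2 ≤ (1 + u0)^2 := by nlinarith [ih.1, ih.2]
        nlinarith [mul_le_mul_of_nonneg_left this hh0.le]
      obtain ⟨h1, h2⟩ := cn_step_s12 ε h (u k) (u (k+1)) hε0 hh0 ih.1 hbk (hrec k)
      exact ⟨h1, h2.trans ih.2⟩
  have hstep : ∀ n, u (n+1) ≤ u n := by
    intro n
    have hbk : h * (1 + u n)^2 ≤ 4 * ε^2 := by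
      have : (1 + u n)^2 ≤ (1 + u0)^2 := by nlinarith [(hinv n).1, (hinv n).2]
      nlinarith [mul_le_mul_of_nonneg_left this hh0.le]
    exact (cn_step_s12 ε h (u n) (u (n+1)) hε0 hh0 (hinv n).1 hbk (hrec n)).2
  have hanti : Antitone u := antitone_nat_of_succ_le hstep
  refine ⟨hinv, hanti, ?_⟩
  have hbdd : BddBelow (Set.range u) := ⟨1, by rintro x ⟨n, rfl⟩; exact (hinv n).1⟩
  have hconv : Tendsto u atTop (nhds (⨅ n, u n)) := tendsto_atTop_ciInf hanti hbdd
  set L := ⨅ n, u n with hL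
  have hL1 : 1 ≤ L := le_ciInf fun n => (hinv n).1
  have h1 : Tendsto (fun n => u (n+1)) atTop (nhds L) :=
    hconv.comp (tendsto_add_atTop_nat 1)
  have h2 : Tendsto (fun n => (u (n + 1) - u n) / h
      + (1 / ε ^ 2) * ((u (n + 1) + u n) / 2) * (((u (n + 1)) ^ 2 + (u n) ^ 2) / 2 - 1))
      atTop (nhds ((L - L)/h + (1/ε^2) * ((L + L)/2) * ((L^2 + L^2)/2 - 1))) := by
    exact ((h1.sub hconv).div_const h).add
      ((tendsto_const_nhds.mul ((h1.add hconv).div_const 2)).mul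
        ((((h1.pow 2).add (hconv.pow 2)).div_const 2).sub tendsto_const_nhds))
  simp only [hrec] at h2
  have heqL : (L - L)/h + (1/ε^2) * ((L + L)/2) * ((L^2 + L^2)/2 - 1) = 0 :=
    (tendsto_nhds_unique tendsto_const_nhds h2).symm
  have hε2 : (0:ℝ) < ε^2 := by positivity
  have hLval : L = 1 := by
    have : L * (L^2 - 1) = 0 := by
      field_simp at heqL
      nlinarith [heqL]
    nlinarith [this, hL1]
  rwa [hLval] at hconv

/-- Modified Crank-Nicolson with `|u0| > 1` and `0 < h ≤ 4ε²/(u0² + 2|u0| + 1)`: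
the numerical solution stays beyond `±1`, is monotone, and converges to `sign u0`. -/
theorem mod_crank_nicolson_monotone_big_initial
    (ε : ℝ) (hε0 : 0 < ε) (hε1 : ε < 1)
    (u0 : ℝ) (hu0 : 1 < |u0|)
    (h : ℝ) (hh0 : 0 < h) (hh1 : h ≤ 4 * ε ^ 2 / (u0 ^ 2 + 2 * |u0| + 1))
    (u : ℕ → ℝ) (hinit : u 0 = u0)
    (hrec : ∀ n : ℕ, (u (n + 1) - u n) / h
      + (1 / ε ^ 2) * ((u (n + 1) + u n) / 2) * (((u (n + 1)) ^ 2 + (u n) ^ 2) / 2 - 1) = 0) :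
    (1 < u0 → (∀ n : ℕ, 1 ≤ u n) ∧ Antitone u) ∧
    (u0 < -1 → (∀ n : ℕ, u n ≤ -1) ∧ Monotone u) ∧
    Filter.Tendsto u Filter.atTop (nhds (if 0 < u0 then (1 : ℝ) else -1)) := by
  have hdpos : 0 < u0 ^ 2 + 2 * |u0| + 1 := by positivity
  have hb : h * (u0 ^ 2 + 2 * |u0| + 1) ≤ 4 * ε ^ 2 := by
    rw [le_div_iff₀ hdpos] at hh1; exact hh1
  rcases lt_or_ge 1 u0 with hpos | hneg
  · -- positive case
    have habs : |u0| = u0 := abs_of_pos (by linarith)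
    have hb' : h * (1 + u0)^2 ≤ 4 * ε^2 := by rw [habs] at hb; nlinarith [hb]
    obtain ⟨hinv, hanti, hconv⟩ := cn_pos_s12 ε u0 h hε0 hpos hh0 hb' u hinit hrec
    refine ⟨fun _ => ⟨fun n => (hinv n).1, hanti⟩, fun hc => absurd hc (by linarith), ?_⟩
    rw [if_pos (by linarith : 0 < u0)]
    exact hconv
  · -- negative case
    have hneg' : u0 < -1 := by
      rcases abs_cases u0 with ⟨h1, _⟩ | ⟨h1, _⟩ <;> [linarith; linarith]
    have habs : |u0| = -u0 := abs_of_neg (by linarith)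
    set v : ℕ → ℝ := fun n => -u n with hv
    have hvinit : v 0 = -u0 := by simp [hv, hinit]
    have hvrec : ∀ n : ℕ, (v (n + 1) - v n) / h
        + (1 / ε ^ 2) * ((v (n + 1) + v n) / 2) * (((v (n + 1)) ^ 2 + (v n) ^ 2) / 2 - 1) = 0 := by
      intro n
      have := hrec n
      simp only [hv]
      have hε2 : (ε:ℝ)^2 ≠ 0 := by positivity
      field_simp at this ⊢
      nlinarith [this]
    have hb' : h * (1 + -u0)^2 ≤ 4 * ε^2 := by rw [habs] at hb; nlinarith [hb]
    obtain ⟨hinv, hanti, hconv⟩ := cn_pos_s12 ε (-u0) h hε0 (by linarith) hh0 hb' v hvinit hvrec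
    refine ⟨fun hc => absurd hc (by linarith), fun _ => ⟨?_, ?_⟩, ?_⟩
    · intro n; have := (hinv n).1; simp only [hv] at this; linarith
    · intro a b hab
      have := hanti hab
      simp only [hv] at this; linarith
    · rw [if_neg (by linarith : ¬ 0 < u0)]
      have := hconv.neg
      simp only [hv, neg_neg] at this
      simpa using this
end

section
/- Let ε ∈ (0,1), let u0 ∈ ℝ with 0 < |u0| < 1, and let 0 < h ≤ ε². Let (u_n) be any real sequence with u_0 = u0 satisfying the modified Crank-Nicolson recurrence (u_n - u_{n-1})/h + (1/ε²)·((u_n + u_{n-1})/2)·((u_n² + u_{n-1}²)/2 - 1) = 0 for all n ≥ 1. Then: if 0 < u0 < 1, 0 < u_n ≤ 1 for all n and (u_n) is nondecreasing; if -1 < u0 < 0, -1 ≤ u_n < 0 for all n and (u_n) is nonincreasing; and in both cases u_n converges to sign(u0) as n → ∞. -/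
/-!
Write `λ = h / ε² ∈ (0, 1]` and multiply the scheme by `h`. With `a = u_{n-1}`, `v = u_n` it becomes
  `(v - a) · (1 - λ/2 + λ/4 · ((v + a)² + 2a²)) = λ a (1 - a²)`,
  `(v - 1) · (1 - λ/2 + λ/4 · (v² + (1 + a) v + 1 + a + a²)) = -(1 - a) (1 - λ (1 + a)² / 4)`,
and both brackets on the left are positive. So `a ∈ [0, 1]` forces `a ≤ v ≤ 1`: the sequence is
nondecreasing and bounded by `1`, and its limit `L ≥ u₀ > 0` satisfies `λ L (L² - 1) = 0`, i.e. `L = 1`.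
The scheme is odd in `u`, which gives the case `u₀ < 0`.
-/

open Filter Topology

/-- `modCNResidual (h / ε ^ 2) u_{n-1} u_n` is `h` times the left-hand side of the scheme. -/
noncomputable def modCNResidual (l a v : ℝ) : ℝ :=
  v - a + l * ((v + a) / 2) * ((v ^ 2 + a ^ 2) / 2 - 1)

theorem modCNResidual_neg (l a v : ℝ) :
    modCNResidual l (-a) (-v) = -modCNResidual l a v := by
  unfold modCNResidual; ring

theorem modCNResidual_self (l L : ℝ) : modCNResidual l L L = l * L * (L ^ 2 - 1) := by
  unfold modCNResidual; ring

theorem modCNResidual_eq_zero_of_scheme {ε h a v : ℝ} (hh : h ≠ 0)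
    (hscheme : (v - a) / h + (1 / ε ^ 2) * ((v + a) / 2) * ((v ^ 2 + a ^ 2) / 2 - 1) = 0) :
    modCNResidual (h / ε ^ 2) a v = 0 :=
  calc modCNResidual (h / ε ^ 2) a v
      = h * ((v - a) / h + (1 / ε ^ 2) * ((v + a) / 2) * ((v ^ 2 + a ^ 2) / 2 - 1)) := by
        rw [modCNResidual, mul_add, mul_div_cancel₀ _ hh]; ring
    _ = 0 := by rw [hscheme, mul_zero]

theorem le_of_modCNResidual_eq_zero {l a v : ℝ} (hl0 : 0 ≤ l) (hl2 : l < 2)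
    (ha0 : 0 ≤ a) (ha1 : a ≤ 1) (hres : modCNResidual l a v = 0) : a ≤ v := by
  have hfactor : 0 < 1 - l / 2 + l / 4 * ((v + a) ^ 2 + 2 * a ^ 2) := by
    have : 0 ≤ l / 4 * ((v + a) ^ 2 + 2 * a ^ 2) := by positivity
    linarith
  have hrhs : 0 ≤ l * a * (1 - a ^ 2) := by
    have : a ^ 2 ≤ 1 := pow_le_one₀ ha0 ha1
    have : 0 ≤ 1 - a ^ 2 := by linarith
    positivity
  have hid : (v - a) * (1 - l / 2 + l / 4 * ((v + a) ^ 2 + 2 * a ^ 2)) = l * a * (1 - a ^ 2) := by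
    unfold modCNResidual at hres; linear_combination hres
  exact sub_nonneg.1 (nonneg_of_mul_nonneg_left (hid ▸ hrhs) hfactor)

theorem le_one_of_modCNResidual_eq_zero {l a v : ℝ} (hl0 : 0 ≤ l) (hl1 : l ≤ 1)
    (ha : |a| ≤ 1) (hres : modCNResidual l a v = 0) : v ≤ 1 := by
  obtain ⟨ha0, ha1⟩ := abs_le.1 ha
  have hfactor : 0 < 1 - l / 2 + l / 4 * (v ^ 2 + (1 + a) * v + 1 + a + a ^ 2) := by
    have hq : 0 ≤ v ^ 2 + (1 + a) * v + 1 + a + a ^ 2 := by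
      nlinarith [sq_nonneg (2 * v + 1 + a), sq_nonneg a, sq_nonneg (a + 1)]
    have : 0 ≤ l / 4 * (v ^ 2 + (1 + a) * v + 1 + a + a ^ 2) := by positivity
    linarith
  have hrhs : 0 ≤ (1 - a) * (1 - l * (1 + a) ^ 2 / 4) := by
    have : (1 + a) ^ 2 ≤ 4 := by nlinarith
    have : l * (1 + a) ^ 2 ≤ 4 := by nlinarith [sq_nonneg (1 + a)]
    exact mul_nonneg (by linarith) (by linarith)
  have hid : (v - 1) * (1 - l / 2 + l / 4 * (v ^ 2 + (1 + a) * v + 1 + a + a ^ 2))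
      = -((1 - a) * (1 - l * (1 + a) ^ 2 / 4)) := by
    unfold modCNResidual at hres; linear_combination hres
  have : 0 ≤ (1 - v) * (1 - l / 2 + l / 4 * (v ^ 2 + (1 + a) * v + 1 + a + a ^ 2)) := by
    rwa [← neg_sub, neg_mul, hid, neg_neg]
  exact sub_nonneg.1 (nonneg_of_mul_nonneg_left this hfactor)

section Orbit

variable {l : ℝ} {u : ℕ → ℝ}

theorem mem_Icc_and_monotone_of_modCNResidual (hl0 : 0 ≤ l) (hl1 : l ≤ 1)
    (hu0 : 0 ≤ u 0) (hu1 : u 0 ≤ 1) (hres : ∀ n, modCNResidual l (u n) (u (n + 1)) = 0) :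
    (∀ n, u n ∈ Set.Icc (u 0) 1) ∧ Monotone u := by
  have hstep : ∀ n, u n ∈ Set.Icc (u 0) 1 → u n ≤ u (n + 1) ∧ u (n + 1) ≤ 1 := fun n hn =>
    ⟨le_of_modCNResidual_eq_zero hl0 (by linarith) (hu0.trans hn.1) hn.2 (hres n),
      le_one_of_modCNResidual_eq_zero hl0 hl1 (abs_le.2 ⟨by linarith [hn.1], hn.2⟩) (hres n)⟩
  have hbound : ∀ n, u n ∈ Set.Icc (u 0) 1 := by
    intro n
    induction n with
    | zero => exact ⟨le_rfl, hu1⟩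
    | succ n ih => exact ⟨ih.1.trans (hstep n ih).1, (hstep n ih).2⟩
  exact ⟨hbound, monotone_nat_of_le_succ fun n => (hstep n (hbound n)).1⟩

theorem tendsto_one_of_modCNResidual (hl0 : 0 < l) (hl1 : l ≤ 1)
    (hu0 : 0 < u 0) (hu1 : u 0 ≤ 1) (hres : ∀ n, modCNResidual l (u n) (u (n + 1)) = 0) :
    Tendsto u atTop (𝓝 1) := by
  obtain ⟨hbound, hmono⟩ := mem_Icc_and_monotone_of_modCNResidual hl0.le hl1 hu0.le hu1 hres
  have hbdd : BddAbove (Set.range u) := ⟨1, by rintro _ ⟨n, rfl⟩; exact (hbound n).2⟩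
  set L := ⨆ n, u n
  have hconv : Tendsto u atTop (𝓝 L) := tendsto_atTop_ciSup hmono hbdd
  have hL : 0 < L := hu0.trans_le (le_ciSup hbdd 0)
  have hfix : modCNResidual l L L = 0 := by
    have hcont : Continuous fun p : ℝ × ℝ => modCNResidual l p.1 p.2 := by
      unfold modCNResidual; fun_prop
    have hlim := (hcont.tendsto (L, L)).comp
      (hconv.prodMk_nhds (hconv.comp (tendsto_add_atTop_nat 1)))
    exact tendsto_nhds_unique hlim (by simp only [Function.comp_def, hres, tendsto_const_nhds])
  rw [modCNResidual_self, mul_eq_zero, mul_eq_zero, sub_eq_zero,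
    pow_eq_one_iff_of_nonneg hL.le two_ne_zero] at hfix
  rcases hfix with (h0 | h0) | h1
  · exact absurd h0 hl0.ne'
  · exact absurd h0 hL.ne'
  · exact h1 ▸ hconv

end Orbit

theorem mod_crank_nicolson_monotone_small_initial_general
    (ε : ℝ)
    (u0 : ℝ) (hu0 : 0 < |u0|) (hu0' : |u0| < 1)
    (h : ℝ) (hh0 : 0 < h) (hh1 : h ≤ ε ^ 2)
    (u : ℕ → ℝ) (hinit : u 0 = u0)
    (hrec : ∀ n : ℕ, (u (n + 1) - u n) / h
      + (1 / ε ^ 2) * ((u (n + 1) + u n) / 2) * (((u (n + 1)) ^ 2 + (u n) ^ 2) / 2 - 1) = 0) :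
    (0 < u0 ∧ u0 < 1 → (∀ n : ℕ, 0 < u n ∧ u n ≤ 1) ∧ Monotone u) ∧
    (-1 < u0 ∧ u0 < 0 → (∀ n : ℕ, -1 ≤ u n ∧ u n < 0) ∧ Antitone u) ∧
    Filter.Tendsto u Filter.atTop (nhds (if 0 < u0 then (1 : ℝ) else -1)) := by
  have hl0 : 0 < h / ε ^ 2 := div_pos hh0 (hh0.trans_le hh1)
  have hl1 : h / ε ^ 2 ≤ 1 := div_le_one_of_le₀ hh1 (sq_nonneg ε)
  have hres n : modCNResidual (h / ε ^ 2) (u n) (u (n + 1)) = 0 :=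
    modCNResidual_eq_zero_of_scheme hh0.ne' (hrec n)
  have hres_neg n : modCNResidual (h / ε ^ 2) (-u n) (-u (n + 1)) = 0 := by
    rw [modCNResidual_neg, hres, neg_zero]
  obtain ⟨hlo, hhi⟩ := abs_lt.1 hu0'
  refine ⟨fun ⟨hpos, _⟩ => ?_, fun ⟨_, hneg⟩ => ?_, ?_⟩
  · obtain ⟨hbound, hmono⟩ := mem_Icc_and_monotone_of_modCNResidual (u := u) hl0.le hl1
      (by linarith) (by linarith) hres
    exact ⟨fun n => ⟨by linarith [(hbound n).1], (hbound n).2⟩, hmono⟩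
  · obtain ⟨hbound, hmono⟩ := mem_Icc_and_monotone_of_modCNResidual (u := (-u ·)) hl0.le hl1
      (by linarith) (by linarith) hres_neg
    exact ⟨fun n => ⟨by linarith [(hbound n).2], by linarith [(hbound n).1]⟩,
      fun _ _ hij => neg_le_neg_iff.1 (hmono hij)⟩
  · rcases lt_or_gt_of_ne (abs_pos.1 hu0) with hneg | hpos
    · rw [if_neg hneg.not_gt]
      simpa using (tendsto_one_of_modCNResidual (u := (-u ·)) hl0 hl1
        (by linarith) (by linarith) hres_neg).neg
    · rw [if_pos hpos]
      exact tendsto_one_of_modCNResidual hl0 hl1 (by linarith) (by linarith) hres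

/-- Modified Crank-Nicolson with `0 < |u0| < 1` and `0 < h ≤ ε²`: the numerical solution
stays between `0` and `sign u0`, is monotone, and converges to `sign u0`. -/
theorem mod_crank_nicolson_monotone_small_initial
    (ε : ℝ) (hε0 : 0 < ε) (hε1 : ε < 1)
    (u0 : ℝ) (hu0 : 0 < |u0|) (hu0' : |u0| < 1)
    (h : ℝ) (hh0 : 0 < h) (hh1 : h ≤ ε ^ 2)
    (u : ℕ → ℝ) (hinit : u 0 = u0)
    (hrec : ∀ n : ℕ, (u (n + 1) - u n) / h
      + (1 / ε ^ 2) * ((u (n + 1) + u n) / 2) * (((u (n + 1)) ^ 2 + (u n) ^ 2) / 2 - 1) = 0) :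
    (0 < u0 ∧ u0 < 1 → (∀ n : ℕ, 0 < u n ∧ u n ≤ 1) ∧ Monotone u) ∧
    (-1 < u0 ∧ u0 < 0 → (∀ n : ℕ, -1 ≤ u n ∧ u n < 0) ∧ Antitone u) ∧
    Filter.Tendsto u Filter.atTop (nhds (if 0 < u0 then (1 : ℝ) else -1)) :=
  mod_crank_nicolson_monotone_small_initial_general ε u0 hu0 hu0' h hh0 hh1 u hinit hrec
end

section
/- Let ε ∈ (0,1) and 0 < h ≤ 2ε². Then there exists u0 > 1 and a real sequence (u_n) with u_0 = u0 satisfying the implicit midpoint recurrence (u_n - u_{n-1})/h + (1/ε²)·(((u_n + u_{n-1})/2)³ - (u_n + u_{n-1})/2) = 0 for all n ≥ 1 such that u_n = -1 for all n ≥ 1; in particular this numerical solution converges to -1 ≠ sign(u0). -/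
/-- For `0 < h ≤ 2ε²` there exist `u0 > 1` and an implicit midpoint sequence starting at
`u0` with `u n = -1` for all `n ≥ 1`; in particular it converges to `-1 ≠ sign u0`. -/
theorem implicit_midpoint_wrong_steady_state
    (ε : ℝ) (hε0 : 0 < ε) (hε1 : ε < 1)
    (h : ℝ) (hh0 : 0 < h) (hh1 : h ≤ 2 * ε ^ 2) :
    ∃ u0 : ℝ, 1 < u0 ∧
      ∃ u : ℕ → ℝ, u 0 = u0 ∧
        (∀ n : ℕ, (u (n + 1) - u n) / h
          + (1 / ε ^ 2) * (((u (n + 1) + u n) / 2) ^ 3 - (u (n + 1) + u n) / 2) = 0) ∧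
        (∀ n : ℕ, 1 ≤ n → u n = -1) ∧
        Filter.Tendsto u Filter.atTop (nhds (-1)) ∧
        (-1 : ℝ) ≠ (if 0 < u0 then (1 : ℝ) else -1) := by
  have hε2 : (0 : ℝ) < ε ^ 2 := by positivity
  set c : ℝ := ε ^ 2 / h with hc
  have hc0 : 0 < c := by positivity
  -- the cubic f m = m^3 - (1+2c) m - 2c
  set f : ℝ → ℝ := fun m => m ^ 3 - (1 + 2 * c) * m - 2 * c with hf
  have hcont : ContinuousOn f (Set.Icc 0 (2 + 2 * c)) := by fun_prop
  have hM : (0 : ℝ) ≤ 2 + 2 * c := by linarith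
  have hf0 : f 0 ≤ 0 := by simp [hf]; linarith
  have hfM : 0 ≤ f (2 + 2 * c) := by
    have : f (2 + 2 * c) = (2 + 2 * c) * (3 + 6 * c + 4 * c ^ 2) - 2 * c := by ring
    nlinarith
  have hmem : (0 : ℝ) ∈ Set.Icc (f 0) (f (2 + 2 * c)) := ⟨hf0, hfM⟩
  obtain ⟨m, hmIcc, hfm⟩ := intermediate_value_Icc hM hcont hmem
  have hm0 : 0 < m := by
    rcases lt_or_eq_of_le hmIcc.1 with h' | h'
    · exact h'
    · exfalso; rw [← h'] at hfm; simp [hf] at hfm; linarith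
  refine ⟨2 * m + 1, by linarith, fun n => if n = 0 then 2 * m + 1 else -1, by simp, ?_, ?_, ?_, ?_⟩
  · intro n
    rcases n with _ | n
    · simp only [if_pos rfl, if_neg (Nat.succ_ne_zero 0)]
      have hkey : m ^ 3 - m = 2 * c * (1 + m) := by
        have := hfm; simp [hf] at this; linarith
      rw [if_pos trivial]
      have hmid : ((-1 : ℝ) + (2 * m + 1)) / 2 = m := by ring
      rw [hmid, hkey]
      rw [hc]
      field_simp
      ring
    · simp only [if_neg (Nat.succ_ne_zero _)]
      norm_num
  · intro n hn
    simp [Nat.one_le_iff_ne_zero.mp hn]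
  · apply Filter.Tendsto.congr' _ tendsto_const_nhds
    filter_upwards [Filter.eventually_ge_atTop 1] with n hn
    simp [Nat.one_le_iff_ne_zero.mp hn]
  · have : (0:ℝ) < 2 * m + 1 := by linarith
    norm_num [this]
end

section
/- Let ε ∈ (0,1), let u0 ∈ ℝ with |u0| > 1, and let 0 < h ≤ 8ε²/(u0² + 4|u0| + 3). Let (u_n) be any real sequence with u_0 = u0 satisfying the implicit midpoint recurrence (u_n - u_{n-1})/h + (1/ε²)·(((u_n + u_{n-1})/2)³ - (u_n + u_{n-1})/2) = 0 for all n ≥ 1. Then: if u0 > 1, u_n ≥ 1 for all n and (u_n) is nonincreasing; if u0 < -1, u_n ≤ -1 for all n and (u_n) is nondecreasing; and in both cases u_n converges to sign(u0) as n → ∞. -/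
open Filter

lemma key_step (ε h a v : ℝ) (hε0 : 0 < ε) (hh0 : 0 < h) (ha : 1 ≤ a)
    (hD : h * (a ^ 2 + 4 * a + 3) ≤ 8 * ε ^ 2)
    (heq : (v - a) / h + (1 / ε ^ 2) * (((v + a) / 2) ^ 3 - (v + a) / 2) = 0) :
    1 ≤ v ∧ v ≤ a := by
  have hhne : h ≠ 0 := ne_of_gt hh0
  have hεne : ε ^ 2 ≠ 0 := by positivity
  have key : ε ^ 2 * (v - a) + h * (((v + a) / 2) ^ 3 - (v + a) / 2) = 0 := by
    have h1 : ε ^ 2 * (v - a) + h * (((v + a) / 2) ^ 3 - (v + a) / 2)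
        = ((v - a) / h + (1 / ε ^ 2) * (((v + a) / 2) ^ 3 - (v + a) / 2)) * (h * ε ^ 2) := by
      field_simp
    rw [h1, heq, zero_mul]
  have hva : v ≤ a := by
    by_contra hva
    push_neg at hva
    have h1 : 0 < ε ^ 2 * (v - a) := mul_pos (pow_pos hε0 2) (by linarith)
    have h2 : 0 < h * ((v + a) * ((v + a) - 2) * ((v + a) + 2)) :=
      mul_pos hh0 (mul_pos (mul_pos (by linarith) (by linarith)) (by linarith))
    nlinarith [key, h1, h2]
  refine ⟨?_, hva⟩
  by_contra hv1
  push_neg at hv1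
  set s := (v + a) / 2 with hs
  set t := (a + 1) / 2 with ht
  have hst : s < t := by rw [hs, ht]; linarith
  have hhe : h ≤ ε ^ 2 := by
    nlinarith [mul_nonneg hh0.le (show (0:ℝ) ≤ a ^ 2 + 4 * a + 3 - 8 by nlinarith)]
  have hquad : 0 ≤ t ^ 2 + t * s + s ^ 2 := by nlinarith [sq_nonneg (2 * t + s), sq_nonneg s]
  have hfac : 0 < (t - s) * (2 * ε ^ 2 - h + h * (t ^ 2 + t * s + s ^ 2)) := by
    apply mul_pos (by linarith)
    have : 0 ≤ h * (t ^ 2 + t * s + s ^ 2) := mul_nonneg hh0.le hquad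
    nlinarith [pow_pos hε0 2]
  have hPt : 2 * ε ^ 2 * (t - a) + h * (t ^ 3 - t) ≤ 0 := by
    have h1 : 0 ≤ (a - 1) * (8 * ε ^ 2 - h * (a ^ 2 + 4 * a + 3)) :=
      mul_nonneg (by linarith) (by linarith)
    rw [ht]; nlinarith [h1]
  nlinarith [key, hfac, hPt]

lemma pos_case (ε u0 h : ℝ) (hε0 : 0 < ε) (hu0 : 1 < u0)
    (hh0 : 0 < h) (hD : h * (u0 ^ 2 + 4 * u0 + 3) ≤ 8 * ε ^ 2)
    (u : ℕ → ℝ) (hinit : u 0 = u0)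
    (hrec : ∀ n : ℕ, (u (n + 1) - u n) / h
      + (1 / ε ^ 2) * (((u (n + 1) + u n) / 2) ^ 3 - (u (n + 1) + u n) / 2) = 0) :
    (∀ n, 1 ≤ u n ∧ u n ≤ u0) ∧ Antitone u ∧ Tendsto u atTop (nhds 1) := by
  have hstep : ∀ n, 1 ≤ u n ∧ u n ≤ u0 := by
    intro n
    induction n with
    | zero => exact ⟨hinit ▸ hu0.le, hinit ▸ le_refl u0⟩
    | succ n ih =>
      have hDn : h * ((u n) ^ 2 + 4 * (u n) + 3) ≤ 8 * ε ^ 2 := by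
        have h1 : (u n) ^ 2 + 4 * (u n) + 3 ≤ u0 ^ 2 + 4 * u0 + 3 := by
          nlinarith [ih.1, ih.2]
        nlinarith [mul_le_mul_of_nonneg_left h1 hh0.le]
      have := key_step ε h (u n) (u (n + 1)) hε0 hh0 ih.1 hDn (hrec n)
      exact ⟨this.1, this.2.trans ih.2⟩
  have hdec : ∀ n, u (n + 1) ≤ u n := by
    intro n
    have hDn : h * ((u n) ^ 2 + 4 * (u n) + 3) ≤ 8 * ε ^ 2 := by
      have h1 : (u n) ^ 2 + 4 * (u n) + 3 ≤ u0 ^ 2 + 4 * u0 + 3 := by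
        nlinarith [(hstep n).1, (hstep n).2]
      nlinarith [mul_le_mul_of_nonneg_left h1 hh0.le]
    exact (key_step ε h (u n) (u (n + 1)) hε0 hh0 (hstep n).1 hDn (hrec n)).2
  have hanti : Antitone u := antitone_nat_of_succ_le hdec
  have hbdd : BddBelow (Set.range u) := ⟨1, by rintro x ⟨n, rfl⟩; exact (hstep n).1⟩
  have htend : Tendsto u atTop (nhds (⨅ n, u n)) := tendsto_atTop_ciInf hanti hbdd
  set L := ⨅ n, u n with hLdef
  have hL1 : 1 ≤ L := le_ciInf fun n => (hstep n).1
  have ht2 : Tendsto (fun n => u (n + 1)) atTop (nhds L) :=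
    htend.comp (tendsto_add_atTop_nat 1)
  have hF : Tendsto (fun n => (u (n + 1) - u n) / h
      + (1 / ε ^ 2) * (((u (n + 1) + u n) / 2) ^ 3 - (u (n + 1) + u n) / 2)) atTop
      (nhds ((L - L) / h + (1 / ε ^ 2) * (((L + L) / 2) ^ 3 - (L + L) / 2))) := by
    exact ((ht2.sub htend).div_const h).add
      ((((((ht2.add htend).div_const 2).pow 3).sub ((ht2.add htend).div_const 2)).const_mul _))
  have hFz : Tendsto (fun _ : ℕ => (0 : ℝ)) atTop
      (nhds ((L - L) / h + (1 / ε ^ 2) * (((L + L) / 2) ^ 3 - (L + L) / 2))) := by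
    have hfun : (fun n => (u (n + 1) - u n) / h
        + (1 / ε ^ 2) * (((u (n + 1) + u n) / 2) ^ 3 - (u (n + 1) + u n) / 2))
        = fun _ : ℕ => (0 : ℝ) := funext hrec
    rwa [hfun] at hF
  have heq0 : (L - L) / h + (1 / ε ^ 2) * (((L + L) / 2) ^ 3 - (L + L) / 2) = 0 :=
    tendsto_nhds_unique hFz tendsto_const_nhds
  have hεne : ε ^ 2 ≠ 0 := by positivity
  have h3 : L ^ 3 - L = 0 := by
    have h4 : (1 / ε ^ 2) * (L ^ 3 - L) = 0 := by
      rw [← heq0]; ring_nf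
    rcases mul_eq_zero.mp h4 with h5 | h5
    · exact absurd h5 (by simp [hεne])
    · exact h5
  have hLe : L = 1 := by
    have hle : L ≤ 1 := by
      by_contra hgt
      push_neg at hgt
      nlinarith [h3, mul_pos (mul_pos (sub_pos.2 hgt) (show (0:ℝ) < L by linarith))
        (show (0:ℝ) < L + 1 by linarith)]
    linarith
  exact ⟨hstep, hanti, hLe ▸ htend⟩

/-- Implicit midpoint with `|u0| > 1` and `0 < h ≤ 8ε²/(u0² + 4|u0| + 3)`:
the numerical solution stays beyond `±1`, is monotone, and converges to `sign u0`. -/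
theorem implicit_midpoint_monotone_big_initial
    (ε : ℝ) (hε0 : 0 < ε) (hε1 : ε < 1)
    (u0 : ℝ) (hu0 : 1 < |u0|)
    (h : ℝ) (hh0 : 0 < h) (hh1 : h ≤ 8 * ε ^ 2 / (u0 ^ 2 + 4 * |u0| + 3))
    (u : ℕ → ℝ) (hinit : u 0 = u0)
    (hrec : ∀ n : ℕ, (u (n + 1) - u n) / h
      + (1 / ε ^ 2) * (((u (n + 1) + u n) / 2) ^ 3 - (u (n + 1) + u n) / 2) = 0) :
    (1 < u0 → (∀ n : ℕ, 1 ≤ u n) ∧ Antitone u) ∧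
    (u0 < -1 → (∀ n : ℕ, u n ≤ -1) ∧ Monotone u) ∧
    Filter.Tendsto u Filter.atTop (nhds (if 0 < u0 then (1 : ℝ) else -1)) := by
  have habs : 0 ≤ |u0| := abs_nonneg u0
  have hDpos : 0 < u0 ^ 2 + 4 * |u0| + 3 := by positivity
  have hD : h * (u0 ^ 2 + 4 * |u0| + 3) ≤ 8 * ε ^ 2 := (le_div_iff₀ hDpos).mp hh1
  rcases lt_abs.mp hu0 with hpos | hneg
  · -- u0 > 1
    have habseq : |u0| = u0 := abs_of_pos (by linarith)
    rw [habseq] at hD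
    obtain ⟨hb, hanti, ht⟩ := pos_case ε u0 h hε0 hpos hh0 hD u hinit hrec
    refine ⟨fun _ => ⟨fun n => (hb n).1, hanti⟩, fun hc => absurd hc (by linarith), ?_⟩
    rw [if_pos (by linarith : (0:ℝ) < u0)]
    exact ht
  · -- u0 < -1 (hneg : 1 < -u0)
    have hneg' : u0 < -1 := by linarith
    have habseq : |u0| = -u0 := abs_of_neg (by linarith)
    rw [habseq] at hD
    have hD' : h * ((-u0) ^ 2 + 4 * (-u0) + 3) ≤ 8 * ε ^ 2 := by nlinarith [hD]
    have hrec' : ∀ n : ℕ, ((fun n => -u n) (n + 1) - (fun n => -u n) n) / h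
        + (1 / ε ^ 2) * ((((fun n => -u n) (n + 1) + (fun n => -u n) n) / 2) ^ 3
          - ((fun n => -u n) (n + 1) + (fun n => -u n) n) / 2) = 0 := by
      intro n
      have h1 : ((-u (n+1)) - (-u n)) / h
          + (1 / ε ^ 2) * ((((-u (n+1)) + (-u n)) / 2) ^ 3 - ((-u (n+1)) + (-u n)) / 2)
          = -((u (n + 1) - u n) / h
            + (1 / ε ^ 2) * (((u (n + 1) + u n) / 2) ^ 3 - (u (n + 1) + u n) / 2)) := by
        ring
      simpa [h1, hrec n] using h1.trans (by rw [hrec n, neg_zero])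
    obtain ⟨hb, hanti, ht⟩ := pos_case ε (-u0) h hε0 hneg hh0 hD'
      (fun n => -u n) (by simp [hinit]) hrec'
    refine ⟨fun hc => absurd hc (by linarith), fun _ => ⟨?_, ?_⟩, ?_⟩
    · intro n
      have h1 := (hb n).1
      linarith
    · exact monotone_nat_of_le_succ fun n => by
        have := hanti (Nat.le_succ n); simp only at this; linarith
    · rw [if_neg (by linarith : ¬ (0:ℝ) < u0)]
      have := ht.neg
      simp only [neg_neg] at this
      convert this using 1
end

section
/- Let ε ∈ (0,1), let u0 ∈ ℝ with 0 < |u0| < 1, and let 0 < h ≤ ε². Let (u_n) be any real sequence with u_0 = u0 satisfying the implicit midpoint recurrence (u_n - u_{n-1})/h + (1/ε²)·(((u_n + u_{n-1})/2)³ - (u_n + u_{n-1})/2) = 0 for all n ≥ 1. Then: if 0 < u0 < 1, 0 < u_n ≤ 1 for all n and (u_n) is nondecreasing; if -1 < u0 < 0, -1 ≤ u_n < 0 for all n and (u_n) is nonincreasing; and in both cases u_n converges to sign(u0) as n → ∞. -/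
lemma imp_mid_step (c a b : ℝ) (hc0 : 0 < c) (hc1 : c ≤ 1) (ha0 : 0 < a) (ha1 : a < 1)
    (hb : b - a + c * (((b + a) / 2) ^ 3 - (b + a) / 2) = 0) : a < b ∧ b < 1 := by
  have hK : (1 : ℝ) / 2 ≤ 1 - c / 2 + c / 8 * ((b + a) ^ 2 + (b + a) * (2 * a) + (2 * a) ^ 2) := by
    nlinarith [sq_nonneg (b + 3 * a), sq_nonneg a, sq_nonneg (b + a)]
  have key : (b - a) * (1 - c / 2 + c / 8 * ((b + a) ^ 2 + (b + a) * (2 * a) + (2 * a) ^ 2))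
      = c * (a - a ^ 3) := by linear_combination hb
  have hrhs : 0 < c * (a - a ^ 3) := by
    have : 0 < a - a ^ 3 := by nlinarith [mul_pos (mul_pos ha0 (show (0:ℝ) < 1 - a by linarith)) (show (0:ℝ) < 1 + a by linarith)]
    exact mul_pos hc0 this
  have hab : a < b := by
    by_contra hcon
    push_neg at hcon
    have hle : (b - a) * (1 - c / 2 + c / 8 * ((b + a) ^ 2 + (b + a) * (2 * a) + (2 * a) ^ 2)) ≤ 0 :=
      mul_nonpos_of_nonpos_of_nonneg (by linarith) (by linarith)
    linarith [key ▸ hle]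
  refine ⟨hab, ?_⟩
  have key2 : (1 - b) * (1 - c / 2 + c / 8 * ((1 + a) ^ 2 + (1 + a) * (b + a) + (b + a) ^ 2))
      = 1 - a + c * (((1 + a) / 2) ^ 3 - (1 + a) / 2) := by linear_combination -hb
  have hK2 : (1 : ℝ) / 2 ≤ 1 - c / 2 + c / 8 * ((1 + a) ^ 2 + (1 + a) * (b + a) + (b + a) ^ 2) := by
    nlinarith [sq_nonneg (1 + b + 2 * a), sq_nonneg (1 - b), sq_nonneg (b + a), sq_nonneg (1 + a)]
  have hbr : 0 < 1 - c * (1 + a) * (3 + a) / 8 := by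
    have h8 : (1 + a) * (3 + a) < 8 := by nlinarith
    have hle : c * ((1 + a) * (3 + a)) ≤ (1 + a) * (3 + a) :=
      mul_le_of_le_one_left (by nlinarith) hc1
    nlinarith
  have hF1 : 0 < 1 - a + c * (((1 + a) / 2) ^ 3 - (1 + a) / 2) := by
    have := mul_pos (show (0:ℝ) < 1 - a by linarith) hbr
    nlinarith
  by_contra hcon
  push_neg at hcon
  have hle : (1 - b) * (1 - c / 2 + c / 8 * ((1 + a) ^ 2 + (1 + a) * (b + a) + (b + a) ^ 2)) ≤ 0 :=
    mul_nonpos_of_nonpos_of_nonneg (by linarith) (by linarith)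
  linarith [key2 ▸ hle]

open Filter Topology

lemma imp_mid_pos (c : ℝ) (hc0 : 0 < c) (hc1 : c ≤ 1) (u : ℕ → ℝ)
    (h0 : 0 < u 0) (h1 : u 0 < 1)
    (hrec : ∀ n : ℕ, u (n + 1) - u n
      + c * (((u (n + 1) + u n) / 2) ^ 3 - (u (n + 1) + u n) / 2) = 0) :
    (∀ n : ℕ, 0 < u n ∧ u n < 1) ∧ Monotone u ∧ Tendsto u atTop (𝓝 1) := by
  have hbnd : ∀ n : ℕ, 0 < u n ∧ u n < 1 := by
    intro n
    induction n with
    | zero => exact ⟨h0, h1⟩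
    | succ k ih =>
      obtain ⟨hk0, hk1⟩ := ih
      obtain ⟨hlt, hlt1⟩ := imp_mid_step c (u k) (u (k + 1)) hc0 hc1 hk0 hk1 (hrec k)
      exact ⟨hk0.trans hlt, hlt1⟩
  have hstep : ∀ n : ℕ, u n ≤ u (n + 1) := by
    intro n
    obtain ⟨hk0, hk1⟩ := hbnd n
    exact (imp_mid_step c (u n) (u (n + 1)) hc0 hc1 hk0 hk1 (hrec n)).1.le
  have hmono : Monotone u := monotone_nat_of_le_succ hstep
  have hbdd : BddAbove (Set.range u) := ⟨1, by rintro x ⟨n, rfl⟩; exact (hbnd n).2.le⟩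
  have hL : Tendsto u atTop (𝓝 (⨆ n, u n)) := tendsto_atTop_ciSup hmono hbdd
  set L := ⨆ n, u n with hLdef
  have hL0 : 0 < L := lt_of_lt_of_le h0 (le_ciSup hbdd 0)
  have hL1 : L ≤ 1 := ciSup_le fun n => (hbnd n).2.le
  have hL' : Tendsto (fun n => u (n + 1)) atTop (𝓝 L) :=
    hL.comp (tendsto_add_atTop_nat 1)
  have hlim : Tendsto (fun n => u (n + 1) - u n
      + c * (((u (n + 1) + u n) / 2) ^ 3 - (u (n + 1) + u n) / 2)) atTop
      (𝓝 (L - L + c * (((L + L) / 2) ^ 3 - (L + L) / 2))) := by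
    exact ((hL'.sub hL).add (((((hL'.add hL).div_const 2).pow 3).sub
      ((hL'.add hL).div_const 2)).const_mul c))
  have heq : L - L + c * (((L + L) / 2) ^ 3 - (L + L) / 2) = 0 := by
    have : Tendsto (fun _ : ℕ => (0 : ℝ)) atTop
        (𝓝 (L - L + c * (((L + L) / 2) ^ 3 - (L + L) / 2))) := by
      refine hlim.congr fun n => ?_
      exact (hrec n)
    exact tendsto_nhds_unique this tendsto_const_nhds
  have hLeq : c * (L ^ 3 - L) = 0 := by linear_combination heq
  have hL3 : L ^ 3 = L := by
    have := mul_eq_zero.mp hLeq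
    rcases this with h | h
    · linarith
    · linarith
  have hge : 1 ≤ L := by
    by_contra hcon
    push_neg at hcon
    have := mul_pos (mul_pos hL0 (show (0:ℝ) < 1 - L by linarith))
      (show (0:ℝ) < 1 + L by linarith)
    nlinarith
  have : L = 1 := le_antisymm hL1 hge
  exact ⟨hbnd, hmono, this ▸ hL⟩

/-- Implicit midpoint with `0 < |u0| < 1` and `0 < h ≤ ε²`: the numerical solution stays
between `0` and `sign u0`, is monotone, and converges to `sign u0`. -/
theorem implicit_midpoint_monotone_small_initial
    (ε : ℝ) (hε0 : 0 < ε) (hε1 : ε < 1)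
    (u0 : ℝ) (hu0 : 0 < |u0|) (hu0' : |u0| < 1)
    (h : ℝ) (hh0 : 0 < h) (hh1 : h ≤ ε ^ 2)
    (u : ℕ → ℝ) (hinit : u 0 = u0)
    (hrec : ∀ n : ℕ, (u (n + 1) - u n) / h
      + (1 / ε ^ 2) * (((u (n + 1) + u n) / 2) ^ 3 - (u (n + 1) + u n) / 2) = 0) :
    (0 < u0 ∧ u0 < 1 → (∀ n : ℕ, 0 < u n ∧ u n ≤ 1) ∧ Monotone u) ∧
    (-1 < u0 ∧ u0 < 0 → (∀ n : ℕ, -1 ≤ u n ∧ u n < 0) ∧ Antitone u) ∧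
    Filter.Tendsto u Filter.atTop (nhds (if 0 < u0 then (1 : ℝ) else -1)) := by
  have hε2 : (0 : ℝ) < ε ^ 2 := by positivity
  set c : ℝ := h / ε ^ 2 with hcdef
  have hc0 : 0 < c := by positivity
  have hc1 : c ≤ 1 := by
    rw [hcdef, div_le_one hε2]; exact hh1
  have hrec' : ∀ n : ℕ, u (n + 1) - u n
      + c * (((u (n + 1) + u n) / 2) ^ 3 - (u (n + 1) + u n) / 2) = 0 := by
    intro n
    have key : u (n + 1) - u n
        + c * (((u (n + 1) + u n) / 2) ^ 3 - (u (n + 1) + u n) / 2)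
        = h * ((u (n + 1) - u n) / h
        + (1 / ε ^ 2) * (((u (n + 1) + u n) / 2) ^ 3 - (u (n + 1) + u n) / 2)) := by
      rw [hcdef]
      field_simp
    rw [key, hrec n, mul_zero]
  rcases lt_or_gt_of_ne (fun h0 : u0 = 0 => by simp [h0] at hu0) with hneg | hpos
  · -- u0 < 0
    have hu0m1 : -1 < u0 := by
      rw [abs_of_neg hneg] at hu0'; linarith
    set v : ℕ → ℝ := fun n => -u n with hvdef
    have hv0 : 0 < v 0 := by simp [hvdef, hinit]; linarith
    have hv1 : v 0 < 1 := by simp [hvdef, hinit]; linarith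
    have hvrec : ∀ n : ℕ, v (n + 1) - v n
        + c * (((v (n + 1) + v n) / 2) ^ 3 - (v (n + 1) + v n) / 2) = 0 := by
      intro n
      simp only [hvdef]
      linear_combination -(hrec' n)
    obtain ⟨hvbnd, hvmono, hvlim⟩ := imp_mid_pos c hc0 hc1 v hv0 hv1 hvrec
    refine ⟨fun h' => absurd h'.1 (by linarith), fun _ => ⟨?_, ?_⟩, ?_⟩
    · intro n
      obtain ⟨a1, a2⟩ := hvbnd n
      constructor <;> [skip; skip] <;> simp [hvdef] at a1 a2 <;> linarith
    · intro a b hab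
      have := hvmono hab
      simp only [hvdef] at this
      linarith
    · have : Filter.Tendsto u Filter.atTop (nhds (-1)) := by
        have := hvlim.neg
        simp only [hvdef, neg_neg] at this
        exact this
      simpa [if_neg (not_lt.mpr hneg.le)] using this
  · -- 0 < u0
    have hu01 : u0 < 1 := by rw [abs_of_pos hpos] at hu0'; linarith
    have h0 : 0 < u 0 := by rw [hinit]; exact hpos
    have h1 : u 0 < 1 := by rw [hinit]; exact hu01
    obtain ⟨hbnd, hmono, hlim⟩ := imp_mid_pos c hc0 hc1 u h0 h1 hrec'
    refine ⟨fun _ => ⟨fun n => ⟨(hbnd n).1, (hbnd n).2.le⟩, hmono⟩,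
      fun h' => absurd h'.2 (by linarith), ?_⟩
    simpa [if_pos hpos] using hlim
end

section
/- Let ε ∈ (0,1), let u0 ∈ ℝ with u0 ∉ {0, 1, -1}, and suppose 0 < h ≤ h*, where h* = 8ε²/(u0² + 4|u0| + 3) if |u0| > 1 and h* = ε² if 0 < |u0| < 1. Let (u_n) be any real sequence with u_0 = u0 satisfying the implicit midpoint recurrence (u_n - u_{n-1})/h + (1/ε²)·(((u_n + u_{n-1})/2)³ - (u_n + u_{n-1})/2) = 0 for all n ≥ 1 such that, in addition, each u_n is a global minimizer over v ∈ ℝ of E_IM^n(v) = (v - u_{n-1})²/(4h) + (1/ε²)·F((v + u_{n-1})/2), where F(u) = (u² - 1)²/4. Then E(u_n) ≤ E(u_{n-1}) for all n ≥ 1, where E(v) = (v² - 1)²/(4ε²). -/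
/-! Write a step of the scheme as `a ↦ b` and put `s = a + b`. Clearing denominators, the
recurrence reads `b - a = r s (4 - s²)` with `r = h / (8ε²)`. For `a > 0`, minimality against the
competitor `-b - 2a`, which has the same midpoint potential, forces `s > 0`. The step-size restriction
then makes every step move `a` towards the well `1` without overshooting it, so
`u n` stays between `u0` and `1` and `|u n ^ 2 - 1|` decreases. Negative `u0` reduces to positive
`u0` under `u ↦ -u`. -/

open Set

noncomputable section

def midpointStepBound (ε u₀ : ℝ) : ℝ :=
  if 1 < |u₀| then 8 * ε ^ 2 / (u₀ ^ 2 + 4 * |u₀| + 3) else ε ^ 2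

def midpointResidual (ε h a b : ℝ) : ℝ :=
  (b - a) / h + (1 / ε ^ 2) * (((b + a) / 2) ^ 3 - (b + a) / 2)

/-- The functional `E_IM^n` with `u_{n-1} = a`. -/
def midpointFunctional (ε h a v : ℝ) : ℝ :=
  (v - a) ^ 2 / (4 * h) + (1 / ε ^ 2) * ((((v + a) / 2) ^ 2 - 1) ^ 2 / 4)

end

section Symmetry

variable (ε h a b v u₀ : ℝ)

theorem midpointStepBound_neg : midpointStepBound ε (-u₀) = midpointStepBound ε u₀ := by
  simp only [midpointStepBound, abs_neg, neg_sq]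

theorem midpointResidual_neg : midpointResidual ε h (-a) (-b) = -midpointResidual ε h a b := by
  unfold midpointResidual
  ring

theorem midpointFunctional_neg :
    midpointFunctional ε h (-a) (-v) = midpointFunctional ε h a v := by
  unfold midpointFunctional
  ring

end Symmetry

section OneStep

variable {ε h r a b : ℝ}

theorem sub_eq_of_midpointResidual_eq_zero (hε : ε ≠ 0) (hh : h ≠ 0)
    (hres : midpointResidual ε h a b = 0) :
    b - a = h / (8 * ε ^ 2) * ((a + b) * (4 - (a + b) ^ 2)) := by
  unfold midpointResidual at hres
  field_simp at hres ⊢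
  linear_combination hres

theorem add_nonneg_of_midpointFunctional_le (hh : 0 < h) (ha : 0 < a)
    (hmin : midpointFunctional ε h a b ≤ midpointFunctional ε h a (-b - 2 * a)) :
    0 ≤ a + b := by
  have hpot : (((-b - 2 * a + a) / 2) ^ 2 - 1) ^ 2 = (((b + a) / 2) ^ 2 - 1) ^ 2 := by ring
  unfold midpointFunctional at hmin
  rw [hpot, add_le_add_iff_right, div_le_div_iff_of_pos_right (by positivity)] at hmin
  nlinarith

theorem mem_Icc_of_midpoint_step_of_le_one (hr₀ : 0 ≤ r) (hr : r ≤ 1 / 8) (ha : a ≤ 1)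
    (hs : 0 < a + b) (hstep : b - a = r * ((a + b) * (4 - (a + b) ^ 2))) : b ∈ Icc a 1 := by
  have hs₂ : a + b ≤ 2 := by
    by_contra! hs₂
    have : r * ((a + b) * (4 - (a + b) ^ 2)) ≤ 0 :=
      mul_nonpos_of_nonneg_of_nonpos hr₀ (mul_nonpos_of_nonneg_of_nonpos hs.le (by nlinarith))
    linarith
  have hg : 0 ≤ (a + b) * (4 - (a + b) ^ 2) := mul_nonneg hs.le (by nlinarith)
  refine ⟨by nlinarith, ?_⟩
  by_contra! hb
  -- `s (4 - s²) = s (2 + s) (2 - s) ≤ 8 (2 - s) < 8 (b - a)`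
  have : (a + b) * (4 - (a + b) ^ 2) ≤ 8 * (2 - (a + b)) := by
    nlinarith [mul_nonneg (sub_nonneg.2 hs₂) (by nlinarith : 0 ≤ 8 - (a + b) * (2 + (a + b)))]
  nlinarith [mul_le_mul_of_nonneg_right hr hg]

theorem mem_Icc_of_midpoint_step_of_one_le (hr₀ : 0 ≤ r) (hr : r * ((a + 1) * (a + 3)) ≤ 1)
    (ha : 1 ≤ a) (hs : 0 < a + b) (hstep : b - a = r * ((a + b) * (4 - (a + b) ^ 2))) :
    b ∈ Icc 1 a := by
  have hs₂ : 2 ≤ a + b := by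
    by_contra! hs₂
    have : 0 ≤ r * ((a + b) * (4 - (a + b) ^ 2)) :=
      mul_nonneg hr₀ (mul_nonneg hs.le (by nlinarith))
    linarith
  have hg : 0 ≤ (a + b) * ((a + b) ^ 2 - 4) := mul_nonneg hs.le (by nlinarith)
  refine ⟨?_, by nlinarith [mul_nonneg hr₀ hg]⟩
  by_contra! hb
  -- `r s (s + 2) (s - 2) ≤ r (a + 1) (a + 3) (s - 2) ≤ s - 2 < a - b`
  have hprod : (a + b) * (a + b + 2) ≤ (a + 1) * (a + 3) := by nlinarith
  have : r * ((a + b) * (a + b + 2)) * (a + b - 2) ≤ a + b - 2 := by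
    nlinarith [mul_le_mul_of_nonneg_left hprod hr₀, sub_nonneg.2 hs₂]
  nlinarith

theorem midpoint_step_mem_uIcc {u₀ : ℝ} (hε : 0 < ε) (hh : 0 < h) (hu₀ : 0 < u₀)
    (hh₀ : h ≤ midpointStepBound ε u₀) (ha : a ∈ uIcc u₀ 1)
    (hres : midpointResidual ε h a b = 0)
    (hmin : ∀ v, midpointFunctional ε h a b ≤ midpointFunctional ε h a v) :
    b ∈ uIcc a 1 := by
  have hstep := sub_eq_of_midpointResidual_eq_zero hε.ne' hh.ne' hres
  have ha₀ : 0 < a := lt_of_lt_of_le (lt_min hu₀ one_pos) ha.1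
  have hs : 0 < a + b := by
    rcases (add_nonneg_of_midpointFunctional_le hh ha₀ (hmin _)).lt_or_eq with hs | hs
    · exact hs
    · rw [← hs] at hstep
      linarith
  have hr₀ : 0 ≤ h / (8 * ε ^ 2) := by positivity
  unfold midpointStepBound at hh₀
  rw [abs_of_pos hu₀] at hh₀
  split_ifs at hh₀ with hu₁
  · rw [uIcc_of_ge hu₁.le] at ha
    rw [uIcc_of_ge ha.1]
    refine mem_Icc_of_midpoint_step_of_one_le hr₀ ?_ ha.1 hs hstep
    have hden : 0 < u₀ ^ 2 + 4 * u₀ + 3 := by positivity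
    rw [le_div_iff₀ hden] at hh₀
    have hmono : (a + 1) * (a + 3) ≤ u₀ ^ 2 + 4 * u₀ + 3 := by nlinarith [ha.1, ha.2]
    rw [div_mul_eq_mul_div, div_le_one (by positivity)]
    nlinarith [mul_le_mul_of_nonneg_left hmono hh.le]
  · rw [uIcc_of_le (not_lt.1 hu₁)] at ha
    rw [uIcc_of_le ha.2]
    refine mem_Icc_of_midpoint_step_of_le_one hr₀ ?_ ha.2 hs hstep
    rw [div_le_iff₀ (by positivity)]
    linarith

end OneStep

theorem sq_sub_one_sq_le_of_mem_uIcc {a b : ℝ} (ha : 0 ≤ a) (hb : b ∈ uIcc a 1) :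
    (b ^ 2 - 1) ^ 2 ≤ (a ^ 2 - 1) ^ 2 := by
  have hfactor :
      (b ^ 2 - 1) ^ 2 - (a ^ 2 - 1) ^ 2 = (b ^ 2 - a ^ 2) * (a ^ 2 + b ^ 2 - 2) := by
    ring
  rcases mem_uIcc.1 hb with ⟨hab, hb₁⟩ | ⟨hb₁, hba⟩
  · have hsq : 0 ≤ b ^ 2 - a ^ 2 := by nlinarith
    nlinarith [mul_nonneg hsq (by nlinarith : 0 ≤ 2 - a ^ 2 - b ^ 2)]
  · have hsq : 0 ≤ a ^ 2 - b ^ 2 := by nlinarith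
    nlinarith [mul_nonneg hsq (by nlinarith : 0 ≤ a ^ 2 + b ^ 2 - 2)]

theorem midpoint_sq_sub_one_sq_le_of_pos {ε h u₀ : ℝ} {u : ℕ → ℝ} (hε : 0 < ε) (hh : 0 < h)
    (hu₀ : 0 < u₀) (hh₀ : h ≤ midpointStepBound ε u₀) (hinit : u 0 = u₀)
    (hres : ∀ n, midpointResidual ε h (u n) (u (n + 1)) = 0)
    (hmin : ∀ n v, midpointFunctional ε h (u n) (u (n + 1)) ≤ midpointFunctional ε h (u n) v)
    (n : ℕ) : (u (n + 1) ^ 2 - 1) ^ 2 ≤ (u n ^ 2 - 1) ^ 2 := by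
  have hstep n (hn : u n ∈ uIcc u₀ 1) : u (n + 1) ∈ uIcc (u n) 1 :=
    midpoint_step_mem_uIcc hε hh hu₀ hh₀ hn (hres n) (hmin n)
  have hmem : ∀ n, u n ∈ uIcc u₀ 1 := by
    intro n
    induction n with
    | zero => exact hinit ▸ left_mem_uIcc
    | succ n ih => exact uIcc_subset_uIcc_right ih (hstep n ih)
  have hpos : 0 ≤ u n := (lt_min hu₀ one_pos).le.trans (hmem n).1
  exact sq_sub_one_sq_le_of_mem_uIcc hpos (hstep n (hmem n))

theorem implicit_midpoint_energy_stability_general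
    (ε : ℝ) (hε0 : 0 < ε)
    (u0 : ℝ) (hu0 : u0 ∉ ({0, 1, -1} : Set ℝ))
    (h : ℝ) (hh0 : 0 < h)
    (hh1 : h ≤ if 1 < |u0| then 8 * ε ^ 2 / (u0 ^ 2 + 4 * |u0| + 3) else ε ^ 2)
    (u : ℕ → ℝ) (hinit : u 0 = u0)
    (hrec : ∀ n : ℕ, (u (n + 1) - u n) / h
      + (1 / ε ^ 2) * (((u (n + 1) + u n) / 2) ^ 3 - (u (n + 1) + u n) / 2) = 0)
    (hmin : ∀ n : ℕ, ∀ v : ℝ,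
      (u (n + 1) - u n) ^ 2 / (4 * h)
        + (1 / ε ^ 2) * ((((u (n + 1) + u n) / 2) ^ 2 - 1) ^ 2 / 4)
      ≤ (v - u n) ^ 2 / (4 * h)
        + (1 / ε ^ 2) * ((((v + u n) / 2) ^ 2 - 1) ^ 2 / 4)) :
    ∀ n : ℕ, ((u (n + 1)) ^ 2 - 1) ^ 2 / (4 * ε ^ 2) ≤ ((u n) ^ 2 - 1) ^ 2 / (4 * ε ^ 2) := by
  intro n
  gcongr ?_ / _
  have hu₀ : u0 ≠ 0 := fun h₀ => hu0 (by simp [h₀])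
  rcases hu₀.lt_or_gt with hneg | hpos
  · have hh₁ : h ≤ midpointStepBound ε (-u0) := by rwa [midpointStepBound_neg]
    simpa only [neg_sq] using midpoint_sq_sub_one_sq_le_of_pos (u := fun n => -u n) hε0 hh0
      (neg_pos.2 hneg) hh₁ (by simp only [hinit])
      (fun n => by rw [midpointResidual_neg, neg_eq_zero]; exact hrec n)
      (fun n v => by
        rw [← neg_neg v, midpointFunctional_neg, midpointFunctional_neg]
        exact hmin n (-v))
      n
  · exact midpoint_sq_sub_one_sq_le_of_pos hε0 hh0 hpos hh1 hinit hrec hmin n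

/-- Energy stability of the implicit midpoint scheme (in its energy-minimization form)
for `0 < h ≤ h*`, where `h* = 8ε²/(u0² + 4|u0| + 3)` if `|u0| > 1` and `h* = ε²` if
`0 < |u0| < 1`. Here `E_IM^n(v) = (v - u_{n-1})²/(4h) + (1/ε²) F((v + u_{n-1})/2)` with
`F(w) = (w² - 1)²/4`, and `E(v) = (v² - 1)²/(4ε²)`. -/
theorem implicit_midpoint_energy_stability
    (ε : ℝ) (hε0 : 0 < ε) (hε1 : ε < 1)
    (u0 : ℝ) (hu0 : u0 ∉ ({0, 1, -1} : Set ℝ))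
    (h : ℝ) (hh0 : 0 < h)
    (hh1 : h ≤ if 1 < |u0| then 8 * ε ^ 2 / (u0 ^ 2 + 4 * |u0| + 3) else ε ^ 2)
    (u : ℕ → ℝ) (hinit : u 0 = u0)
    (hrec : ∀ n : ℕ, (u (n + 1) - u n) / h
      + (1 / ε ^ 2) * (((u (n + 1) + u n) / 2) ^ 3 - (u (n + 1) + u n) / 2) = 0)
    (hmin : ∀ n : ℕ, ∀ v : ℝ,
      (u (n + 1) - u n) ^ 2 / (4 * h)
        + (1 / ε ^ 2) * ((((u (n + 1) + u n) / 2) ^ 2 - 1) ^ 2 / 4)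
      ≤ (v - u n) ^ 2 / (4 * h)
        + (1 / ε ^ 2) * ((((v + u n) / 2) ^ 2 - 1) ^ 2 / 4)) :
    ∀ n : ℕ, ((u (n + 1)) ^ 2 - 1) ^ 2 / (4 * ε ^ 2) ≤ ((u n) ^ 2 - 1) ^ 2 / (4 * ε ^ 2) :=
  implicit_midpoint_energy_stability_general ε hε0 u0 hu0 h hh0 hh1 u hinit hrec hmin
end

section
/- Let ε ∈ (0,1), let u0 ∈ ℝ with |u0| > 1, and let 0 < h ≤ 4ε²/(u0² + 2|u0| - 1). Let (u_n) be any real sequence with u_0 = u0 satisfying the convex-splitting modified Crank-Nicolson recurrence (u_n - u_{n-1})/h + (1/ε²)·((u_n + u_{n-1})/2)·((u_n² + u_{n-1}²)/2) - (1/ε²)·u_{n-1} = 0 for all n ≥ 1. Then: if u0 > 1, u_n ≥ 1 for all n and (u_n) is nonincreasing; if u0 < -1, u_n ≤ -1 for all n and (u_n) is nondecreasing; and in both cases u_n converges to sign(u0) as n → ∞. -/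
/-!
Multiplying the scheme by `4ε²h` gives `4ε²(a - b) + h((a + b)(a² + b²) - 4b) = 0` for
`b = u_{n-1}`, `a = u_n`. The left side is strictly increasing in `a`, and at `a = 1` it equals
`(b - 1)(h(b² + 2b - 1) - 4ε²) ≤ 0` as long as `1 ≤ b ≤ u0` and `h(u0² + 2u0 - 1) ≤ 4ε²`; hence
`1 ≤ u_n`. For `a > b ≥ 1` it is positive, since `(a + b)(a² + b²) > 4b³ ≥ 4b`; hence
`u_n ≤ u_{n-1}`. The monotone bounded sequence converges, and its limit `L ≥ 1` is a fixed point
of the scheme, i.e. `L³ = L`, so `L = 1`. The case `u0 < -1` follows by the symmetry `u ↦ -u`.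
-/

open Filter Topology

namespace CSModCN

/-- The residual of one step of the scheme from `b = u_{n-1}` to `a = u_n`. -/
noncomputable def residual (ε h b a : ℝ) : ℝ :=
  (a - b) / h + (1 / ε ^ 2) * ((a + b) / 2) * ((a ^ 2 + b ^ 2) / 2) - (1 / ε ^ 2) * b

variable {ε h : ℝ}

theorem residual_neg (a b : ℝ) : residual ε h (-b) (-a) = -residual ε h b a := by
  unfold residual
  ring

theorem residual_self (L : ℝ) : residual ε h L L = (L ^ 3 - L) / ε ^ 2 := by
  unfold residual
  ring

theorem continuous_residual : Continuous fun p : ℝ × ℝ => residual ε h p.1 p.2 := by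
  unfold residual
  fun_prop

theorem residual_eq_zero_iff (hε : ε ≠ 0) (hh : h ≠ 0) {a b : ℝ} :
    residual ε h b a = 0 ↔ 4 * ε ^ 2 * (a - b) + h * ((a + b) * (a ^ 2 + b ^ 2) - 4 * b) = 0 := by
  have hscale : 4 * ε ^ 2 * h * residual ε h b a =
      4 * ε ^ 2 * (a - b) + h * ((a + b) * (a ^ 2 + b ^ 2) - 4 * b) := by
    unfold residual
    field_simp
    ring
  rw [← hscale]
  simp [hε, hh]

theorem le_of_residual_eq_zero (hε : ε ≠ 0) (hh : 0 < h) {a b : ℝ} (hb : 1 ≤ b)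
    (hres : residual ε h b a = 0) : a ≤ b := by
  rw [residual_eq_zero_iff hε hh.ne'] at hres
  by_contra! hab
  have hcubic : 4 * b < (a + b) * (a ^ 2 + b ^ 2) := by nlinarith
  have hε2 : 0 < ε ^ 2 := by positivity
  nlinarith [mul_pos hε2 (sub_pos.2 hab), mul_pos hh (sub_pos.2 hcubic)]

theorem one_le_of_residual_eq_zero (hε : ε ≠ 0) (hh : 0 < h) {a b : ℝ} (hb : 1 ≤ b)
    (hstep : h * (b ^ 2 + 2 * b - 1) ≤ 4 * ε ^ 2) (hres : residual ε h b a = 0) : 1 ≤ a := by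
  rw [residual_eq_zero_iff hε hh.ne'] at hres
  by_contra! ha
  have at_one : 4 * ε ^ 2 * (1 - b) + h * ((1 + b) * (1 + b ^ 2) - 4 * b) ≤ 0 := by
    have hfactor : 4 * ε ^ 2 * (1 - b) + h * ((1 + b) * (1 + b ^ 2) - 4 * b) =
        (b - 1) * (h * (b ^ 2 + 2 * b - 1) - 4 * ε ^ 2) := by ring
    rw [hfactor]
    exact mul_nonpos_of_nonneg_of_nonpos (by linarith) (by linarith)
  have hslope : 0 < 4 * ε ^ 2 + h * (a ^ 2 + a * b + b ^ 2 + a + b + 1) := by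
    have : 0 ≤ a ^ 2 + a * b + b ^ 2 + a + b + 1 := by
      nlinarith [sq_nonneg (a + b), sq_nonneg (a + 1), sq_nonneg (b + 1)]
    positivity
  have hdiff : 4 * ε ^ 2 * (1 - b) + h * ((1 + b) * (1 + b ^ 2) - 4 * b) =
      (1 - a) * (4 * ε ^ 2 + h * (a ^ 2 + a * b + b ^ 2 + a + b + 1)) := by
    linear_combination hres
  linarith [mul_pos (sub_pos.2 ha) hslope]

variable {u : ℕ → ℝ}

theorem mem_Icc_of_residual_eq_zero (hε : ε ≠ 0) (hh : 0 < h)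
    (hrec : ∀ n, residual ε h (u n) (u (n + 1)) = 0) (hu0 : 1 ≤ u 0)
    (hstep : h * (u 0 ^ 2 + 2 * u 0 - 1) ≤ 4 * ε ^ 2) (n : ℕ) : u n ∈ Set.Icc 1 (u 0) := by
  induction n with
  | zero => exact ⟨hu0, le_rfl⟩
  | succ n ih =>
    obtain ⟨hlow, hup⟩ := ih
    have hstep_n : h * (u n ^ 2 + 2 * u n - 1) ≤ 4 * ε ^ 2 := by
      refine le_trans ?_ hstep
      gcongr
    exact ⟨one_le_of_residual_eq_zero hε hh hlow hstep_n (hrec n),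
      (le_of_residual_eq_zero hε hh hlow (hrec n)).trans hup⟩

theorem antitone_of_residual_eq_zero (hε : ε ≠ 0) (hh : 0 < h)
    (hrec : ∀ n, residual ε h (u n) (u (n + 1)) = 0) (hlow : ∀ n, 1 ≤ u n) : Antitone u :=
  antitone_nat_of_succ_le fun n => le_of_residual_eq_zero hε hh (hlow n) (hrec n)

theorem residual_eq_zero_of_tendsto (hrec : ∀ n, residual ε h (u n) (u (n + 1)) = 0) {L : ℝ}
    (hL : Tendsto u atTop (𝓝 L)) : residual ε h L L = 0 := by
  have hpair : Tendsto (fun n => (u n, u (n + 1))) atTop (𝓝 (L, L)) :=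
    hL.prodMk_nhds (hL.comp (tendsto_add_atTop_nat 1))
  have hres : Tendsto (fun n => residual ε h (u n) (u (n + 1))) atTop (𝓝 (residual ε h L L)) :=
    (continuous_residual.tendsto (L, L)).comp hpair
  simp only [hrec, tendsto_const_nhds_iff] at hres
  exact hres.symm

theorem tendsto_one_of_residual_eq_zero (hε : ε ≠ 0) (hh : 0 < h)
    (hrec : ∀ n, residual ε h (u n) (u (n + 1)) = 0) (hu0 : 1 ≤ u 0)
    (hstep : h * (u 0 ^ 2 + 2 * u 0 - 1) ≤ 4 * ε ^ 2) :
    (∀ n, 1 ≤ u n) ∧ Antitone u ∧ Tendsto u atTop (𝓝 1) := by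
  have hlow n := (mem_Icc_of_residual_eq_zero hε hh hrec hu0 hstep n).1
  have hanti := antitone_of_residual_eq_zero hε hh hrec hlow
  have hL := tendsto_atTop_ciInf hanti ⟨1, Set.forall_mem_range.2 hlow⟩
  set L := ⨅ n, u n
  have hL1 : 1 ≤ L := le_ciInf hlow
  have hfixed : (L - 1) * (L * (L + 1)) = 0 := by
    have := residual_eq_zero_of_tendsto hrec hL
    rw [residual_self, div_eq_zero_iff, or_iff_left (pow_ne_zero 2 hε)] at this
    linear_combination this
  have hL_eq : L = 1 := by
    rcases mul_eq_zero.1 hfixed with hsub | hprod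
    · linarith
    · nlinarith
  exact ⟨hlow, hanti, hL_eq ▸ hL⟩

end CSModCN

open CSModCN in
theorem cs_mod_crank_nicolson_monotone_big_initial_general
    (ε : ℝ) (hε0 : 0 < ε)
    (u0 : ℝ) (hu0 : 1 < |u0|)
    (h : ℝ) (hh0 : 0 < h) (hh1 : h ≤ 4 * ε ^ 2 / (u0 ^ 2 + 2 * |u0| - 1))
    (u : ℕ → ℝ) (hinit : u 0 = u0)
    (hrec : ∀ n : ℕ, (u (n + 1) - u n) / h
      + (1 / ε ^ 2) * ((u (n + 1) + u n) / 2) * (((u (n + 1)) ^ 2 + (u n) ^ 2) / 2)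
      - (1 / ε ^ 2) * u n = 0) :
    (1 < u0 → (∀ n : ℕ, 1 ≤ u n) ∧ Antitone u) ∧
    (u0 < -1 → (∀ n : ℕ, u n ≤ -1) ∧ Monotone u) ∧
    Filter.Tendsto u Filter.atTop (nhds (if 0 < u0 then (1 : ℝ) else -1)) := by
  have hres : ∀ n, residual ε h (u n) (u (n + 1)) = 0 := hrec
  have hstep : h * (|u0| ^ 2 + 2 * |u0| - 1) ≤ 4 * ε ^ 2 := by
    rw [sq_abs, ← le_div_iff₀ (by nlinarith)]
    exact hh1
  rcases lt_or_gt_of_ne (abs_pos.1 (one_pos.trans hu0)) with hneg | hpos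
  · rw [abs_of_neg hneg] at hstep hu0
    have hres_neg n : residual ε h (-u n) (-u (n + 1)) = 0 := by rw [residual_neg, hres, neg_zero]
    obtain ⟨hlow, hanti, hlim⟩ := tendsto_one_of_residual_eq_zero hε0.ne' hh0 hres_neg
      (by rw [hinit]; linarith) (by rwa [hinit])
    refine ⟨fun hgt => by linarith, fun _ => ⟨fun n => by linarith [hlow n], ?_⟩, ?_⟩
    · simpa using hanti.neg
    · simpa [hneg.not_gt] using hlim.neg
  · rw [abs_of_pos hpos] at hstep hu0
    obtain ⟨hlow, hanti, hlim⟩ := tendsto_one_of_residual_eq_zero hε0.ne' hh0 hres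
      (hinit ▸ hu0.le) (hinit ▸ hstep)
    exact ⟨fun _ => ⟨hlow, hanti⟩, fun hlt => by linarith, by simpa [hpos] using hlim⟩

/-- CS-modCN with `|u0| > 1` and `0 < h ≤ 4ε²/(u0² + 2|u0| - 1)`: the numerical solution
stays beyond `±1`, is monotone, and converges to `sign u0`. -/
theorem cs_mod_crank_nicolson_monotone_big_initial
    (ε : ℝ) (hε0 : 0 < ε) (hε1 : ε < 1)
    (u0 : ℝ) (hu0 : 1 < |u0|)
    (h : ℝ) (hh0 : 0 < h) (hh1 : h ≤ 4 * ε ^ 2 / (u0 ^ 2 + 2 * |u0| - 1))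
    (u : ℕ → ℝ) (hinit : u 0 = u0)
    (hrec : ∀ n : ℕ, (u (n + 1) - u n) / h
      + (1 / ε ^ 2) * ((u (n + 1) + u n) / 2) * (((u (n + 1)) ^ 2 + (u n) ^ 2) / 2)
      - (1 / ε ^ 2) * u n = 0) :
    (1 < u0 → (∀ n : ℕ, 1 ≤ u n) ∧ Antitone u) ∧
    (u0 < -1 → (∀ n : ℕ, u n ≤ -1) ∧ Monotone u) ∧
    Filter.Tendsto u Filter.atTop (nhds (if 0 < u0 then (1 : ℝ) else -1)) :=
  cs_mod_crank_nicolson_monotone_big_initial_general ε hε0 u0 hu0 h hh0 hh1 u hinit hrec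
end

section
/- Let ε ∈ (0,1), let u0 ∈ ℝ with 0 < |u0| < 1, and let 0 < h ≤ 2ε². Let (u_n) be any real sequence with u_0 = u0 satisfying the convex-splitting modified Crank-Nicolson recurrence (u_n - u_{n-1})/h + (1/ε²)·((u_n + u_{n-1})/2)·((u_n² + u_{n-1}²)/2) - (1/ε²)·u_{n-1} = 0 for all n ≥ 1. Then: if 0 < u0 < 1, 0 < u_n ≤ 1 for all n and (u_n) is nondecreasing; if -1 < u0 < 0, -1 ≤ u_n < 0 for all n and (u_n) is nonincreasing; and in both cases u_n converges to sign(u0) as n → ∞. -/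
open Filter Topology

private lemma cs_step (α w v : ℝ) (hα0 : 0 < α) (hα2 : α ≤ 2)
    (hw0 : 0 < w) (hw1 : w < 1)
    (heq : v - w + α * ((v + w) * (v ^ 2 + w ^ 2) / 4) - α * w = 0) :
    w < v ∧ v < 1 := by
  have key1 : (v - w) * (1 + α * (v ^ 2 + 2 * v * w + 3 * w ^ 2) / 4)
      = α * w * (1 - w ^ 2) := by linear_combination heq
  have key2 : (1 - v) * (1 + α * (v ^ 2 + (1 + w) * v + 1 + w + w ^ 2) / 4)
      = (1 - w) * (4 - α * (w ^ 2 + 2 * w - 1)) / 4 := by linear_combination -heq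
  have p1 : 0 < 1 + α * (v ^ 2 + 2 * v * w + 3 * w ^ 2) / 4 := by
    nlinarith [sq_nonneg (v + w), sq_nonneg w]
  have p2 : 0 < 1 + α * (v ^ 2 + (1 + w) * v + 1 + w + w ^ 2) / 4 := by
    nlinarith [sq_nonneg (2 * v + 1 + w), sq_nonneg w]
  have r1 : 0 < α * w * (1 - w ^ 2) := by
    apply mul_pos (mul_pos hα0 hw0); nlinarith
  have r2' : 0 < 4 - α * (w ^ 2 + 2 * w - 1) := by
    rcases le_or_gt (w ^ 2 + 2 * w - 1) 0 with hc | hc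
    · nlinarith [mul_nonpos_of_nonneg_of_nonpos hα0.le hc]
    · nlinarith [mul_le_mul_of_nonneg_right hα2 hc.le]
  have r2 : 0 < (1 - w) * (4 - α * (w ^ 2 + 2 * w - 1)) / 4 :=
    div_pos (mul_pos (by linarith) r2') (by norm_num)
  constructor
  · nlinarith
  · nlinarith

private lemma cs_convert (ε h v w : ℝ) (hε : ε ≠ 0) (hh : h ≠ 0)
    (heq : (v - w) / h + (1 / ε ^ 2) * ((v + w) / 2) * ((v ^ 2 + w ^ 2) / 2)
      - (1 / ε ^ 2) * w = 0) :
    v - w + (h / ε ^ 2) * ((v + w) * (v ^ 2 + w ^ 2) / 4) - (h / ε ^ 2) * w = 0 := by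
  field_simp at heq ⊢
  linear_combination heq

private lemma cs_pos (α : ℝ) (hα0 : 0 < α) (hα2 : α ≤ 2) (u : ℕ → ℝ)
    (h0 : 0 < u 0) (h1 : u 0 < 1)
    (heq : ∀ n : ℕ, u (n + 1) - u n
      + α * ((u (n + 1) + u n) * ((u (n + 1)) ^ 2 + (u n) ^ 2) / 4) - α * u n = 0) :
    (∀ n : ℕ, 0 < u n ∧ u n < 1) ∧ Monotone u ∧ Tendsto u atTop (nhds 1) := by
  have hb : ∀ n : ℕ, 0 < u n ∧ u n < 1 := by
    intro n
    induction n with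
    | zero => exact ⟨h0, h1⟩
    | succ n ih =>
        have hst := cs_step α (u n) (u (n + 1)) hα0 hα2 ih.1 ih.2 (heq n)
        exact ⟨ih.1.trans hst.1, hst.2⟩
  have hms : ∀ n : ℕ, u n ≤ u (n + 1) := fun n =>
    (cs_step α (u n) (u (n + 1)) hα0 hα2 (hb n).1 (hb n).2 (heq n)).1.le
  have hmono : Monotone u := monotone_nat_of_le_succ hms
  have hbdd : BddAbove (Set.range u) := by
    refine ⟨1, ?_⟩
    rintro x ⟨n, rfl⟩
    exact (hb n).2.le
  have hconv : Tendsto u atTop (nhds (⨆ n, u n)) := tendsto_atTop_ciSup hmono hbdd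
  set L := ⨆ n, u n with hLdef
  have hL1 : L ≤ 1 := ciSup_le fun n => (hb n).2.le
  have hL0 : 0 < L := lt_of_lt_of_le h0 (le_ciSup hbdd 0)
  have h2 : Tendsto (fun n => u (n + 1)) atTop (nhds L) :=
    hconv.comp (tendsto_add_atTop_nat 1)
  have h3 : Tendsto (fun n => u (n + 1) - u n
      + α * ((u (n + 1) + u n) * ((u (n + 1)) ^ 2 + (u n) ^ 2) / 4) - α * u n) atTop
      (nhds (L - L + α * ((L + L) * (L ^ 2 + L ^ 2) / 4) - α * L)) := by
    exact ((h2.sub hconv).add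
      ((((h2.add hconv).mul ((h2.pow 2).add (hconv.pow 2))).div_const 4).const_mul α)).sub
      (hconv.const_mul α)
  have hE : L - L + α * ((L + L) * (L ^ 2 + L ^ 2) / 4) - α * L = 0 :=
    tendsto_nhds_unique (h3.congr heq) tendsto_const_nhds
  have hfac : α * (L ^ 3 - L) = 0 := by linear_combination hE
  have hL3 : L ^ 3 - L = 0 := (mul_eq_zero.mp hfac).resolve_left hα0.ne'
  have hL : L = 1 := le_antisymm hL1 (by nlinarith [mul_pos hL0 hL0])
  rw [hL] at hconv
  exact ⟨hb, hmono, hconv⟩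

/-- CS-modCN with `0 < |u0| < 1` and `0 < h ≤ 2ε²`: the numerical solution stays between
`0` and `sign u0`, is monotone, and converges to `sign u0`. -/
theorem cs_mod_crank_nicolson_monotone_small_initial
    (ε : ℝ) (hε0 : 0 < ε) (hε1 : ε < 1)
    (u0 : ℝ) (hu0 : 0 < |u0|) (hu0' : |u0| < 1)
    (h : ℝ) (hh0 : 0 < h) (hh1 : h ≤ 2 * ε ^ 2)
    (u : ℕ → ℝ) (hinit : u 0 = u0)
    (hrec : ∀ n : ℕ, (u (n + 1) - u n) / h
      + (1 / ε ^ 2) * ((u (n + 1) + u n) / 2) * (((u (n + 1)) ^ 2 + (u n) ^ 2) / 2)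
      - (1 / ε ^ 2) * u n = 0) :
    (0 < u0 ∧ u0 < 1 → (∀ n : ℕ, 0 < u n ∧ u n ≤ 1) ∧ Monotone u) ∧
    (-1 < u0 ∧ u0 < 0 → (∀ n : ℕ, -1 ≤ u n ∧ u n < 0) ∧ Antitone u) ∧
    Filter.Tendsto u Filter.atTop (nhds (if 0 < u0 then (1 : ℝ) else -1)) := by
  have hε2 : (0 : ℝ) < ε ^ 2 := by positivity
  have hα0 : 0 < h / ε ^ 2 := div_pos hh0 hε2
  have hα2 : h / ε ^ 2 ≤ 2 := (div_le_iff₀ hε2).mpr (by linarith)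
  have hne : u0 ≠ 0 := fun hz => by simp [hz] at hu0
  rcases hne.lt_or_gt with hneg | hpos
  · -- u0 < 0, so -1 < u0 < 0
    have hu0n : -1 < u0 := by
      rcases abs_lt.mp hu0' with ⟨hl, _⟩; linarith
    set v : ℕ → ℝ := fun n => -(u n) with hv
    have hrecv : ∀ n : ℕ, v (n + 1) - v n
        + (h / ε ^ 2) * ((v (n + 1) + v n) * ((v (n + 1)) ^ 2 + (v n) ^ 2) / 4)
        - (h / ε ^ 2) * v n = 0 := by
      intro n
      have hc : (v (n + 1) - v n) / h
          + (1 / ε ^ 2) * ((v (n + 1) + v n) / 2) * (((v (n + 1)) ^ 2 + (v n) ^ 2) / 2)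
          - (1 / ε ^ 2) * v n = 0 := by
        simp only [hv]
        linear_combination -(hrec n)
      exact cs_convert ε h (v (n + 1)) (v n) hε0.ne' hh0.ne' hc
    have hv0 : 0 < v 0 := by simp [hv, hinit]; linarith
    have hv1 : v 0 < 1 := by simp only [hv, hinit]; linarith
    obtain ⟨hbv, hmv, hcv⟩ := cs_pos (h / ε ^ 2) hα0 hα2 v hv0 hv1 hrecv
    refine ⟨fun ⟨h1, _⟩ => absurd h1 (by linarith), ?_, ?_⟩
    · intro _
      constructor
      · intro n
        have := hbv n
        simp only [hv] at this
        constructor <;> linarith [this.1, this.2]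
      · intro a b hab
        have := hmv hab
        simp only [hv] at this
        linarith
    · have := hcv.neg
      simp only [hv, neg_neg] at this
      rw [if_neg (not_lt.mpr hneg.le)]
      exact this
  · -- 0 < u0 < 1
    have hu0p : u0 < 1 := lt_of_abs_lt hu0'
    have hrecu : ∀ n : ℕ, u (n + 1) - u n
        + (h / ε ^ 2) * ((u (n + 1) + u n) * ((u (n + 1)) ^ 2 + (u n) ^ 2) / 4)
        - (h / ε ^ 2) * u n = 0 := fun n =>
      cs_convert ε h (u (n + 1)) (u n) hε0.ne' hh0.ne' (hrec n)
    obtain ⟨hbu, hmu, hcu⟩ := cs_pos (h / ε ^ 2) hα0 hα2 u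
      (by rw [hinit]; exact hpos) (by rw [hinit]; exact hu0p) hrecu
    refine ⟨fun _ => ⟨fun n => ⟨(hbu n).1, (hbu n).2.le⟩, hmu⟩,
      fun ⟨_, h2⟩ => absurd h2 (by linarith), ?_⟩
    rw [if_pos hpos]
    exact hcu
end
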